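/- arXiv:2209.10162 — 5 statements merged into one kernel-verified Lean document; each statement's English description precedes it below -/
import Mathlib

section
/- Let d ∈ ℕ and let Ψ = (ψ₀,…,ψ_d) ∈ ℝ^{d+1} be symmetric, i.e. ψ_j = ψ_{d−j} for all j ∈ {0,…,d}. Then for every x ∈ [−1,1], Im⟨0|U(x,Ψ)|0⟩ = Im⟨0|W(x)·U(x,Ψ)·W(x)|0⟩, where ⟨0|M|0⟩ denotes the (0,0) entry of a 2×2 matrix M. -/
open scoped Real
noncomputable section

/-- The QSP signal matrix `W(x)`: diagonal entries `x`, off-diagonal entries `i√(1-x²)`. -/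
def Wmat (x : ℝ) : Matrix (Fin 2) (Fin 2) ℂ :=
  !![(x : ℂ), Complex.I * (Real.sqrt (1 - x ^ 2) : ℂ);
     Complex.I * (Real.sqrt (1 - x ^ 2) : ℂ), (x : ℂ)]

/-- `exp(i ψ Z)` where `Z = diag(1, -1)`. -/
def expZ (ψ : ℝ) : Matrix (Fin 2) (Fin 2) ℂ :=
  !![Complex.exp (Complex.I * (ψ : ℂ)), 0; 0, Complex.exp (-(Complex.I * (ψ : ℂ)))]

/-- The QSP unitary `U(x, Ψ) = e^{iψ₀Z} ∏_{j=1}^{d} (W(x) e^{iψ_j Z})`,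
with phase factors `ψ₀, …, ψ_d` given as the first `d+1` entries of `Ψ : ℕ → ℝ`. -/
def Umat (x : ℝ) (d : ℕ) (Ψ : ℕ → ℝ) : Matrix (Fin 2) (Fin 2) ℂ :=
  expZ (Ψ 0) * (((List.range d).map fun j => Wmat x * expZ (Ψ (j + 1))).prod)

/-- `g(x, Ψ) = Im ⟨0|U(x,Ψ)|0⟩`. -/
def gfun (x : ℝ) (d : ℕ) (Ψ : ℕ → ℝ) : ℝ := (Umat x d Ψ 0 0).im

/-- The partial derivative `∂g(x,Ψ)/∂ψ_k`. -/
def gfunPD (x : ℝ) (d k : ℕ) (Ψ : ℕ → ℝ) : ℝ :=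
  deriv (fun t => gfun x d (Function.update Ψ k t)) (Ψ k)

/-- The second partial derivative `∂²g(x,Ψ)/∂ψ_r∂ψ_s`. -/
def gfunPD2 (x : ℝ) (d r s : ℕ) (Ψ : ℕ → ℝ) : ℝ :=
  deriv (fun t => gfunPD x d s (Function.update Ψ r t)) (Ψ r)

/-- The full symmetric phase-factor sequence
`Ψ(Φ, n) = (φ_{n-1}, …, φ₁, 2φ₀, φ₁, …, φ_{n-1})` of length `2n-1`
associated with even-parity reduced phase factors `Φ`. -/
def pad (Φ : ℕ →₀ ℝ) (n : ℕ) : ℕ → ℝ := fun j =>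
  if j + 1 < n then Φ (n - 1 - j) else if j + 1 = n then 2 * Φ 0 else Φ (j + 1 - n)

/-- One plus the largest element of the support of `Φ`; thus `Φ k = 0` for all `k ≥ nOf Φ`. -/
def nOf (Φ : ℕ →₀ ℝ) : ℕ := Φ.support.sup id + 1

/-- `g(x, Φ)` for even-parity reduced phase factors `Φ` (independent of the padding length). -/
def gred (x : ℝ) (Φ : ℕ →₀ ℝ) : ℝ := gfun x (2 * nOf Φ - 2) (pad Φ (nOf Φ))

/-- The `j`-th coefficient in the even Chebyshev expansion `f = ∑_j c_j T_{2j}` on `[-1,1]`,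
defined via the Fourier-type integral formula, which recovers the coefficients whenever
`f` restricted to `[-1,1]` is such a finite combination. -/
def chebCoeff (f : ℝ → ℝ) (j : ℕ) : ℝ :=
  (if j = 0 then 1 / (2 * π) else 1 / π) *
    ∫ θ in (0:ℝ)..(2 * π), f (Real.cos θ) * Real.cos (2 * j * θ)

/-- `F(Φ)`: the Chebyshev-coefficient sequence of `g(·, Φ)`, so that
`g(x,Φ) = ∑_j (F Φ)_j T_{2j}(x)` on `[-1,1]`. -/
def Fmap (Φ : ℕ →₀ ℝ) (j : ℕ) : ℝ := chebCoeff (fun x => gred x Φ) j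

/-- The ℓ¹ norm of a finitely supported sequence. -/
def l1 (Φ : ℕ →₀ ℝ) : ℝ := ∑ k ∈ Φ.support, |Φ k|

/-- Partial derivative `∂g(x,Φ)/∂φ_k`. -/
def gredPD (k : ℕ) (x : ℝ) (Φ : ℕ →₀ ℝ) : ℝ :=
  deriv (fun t => gred x (Φ.update k t)) (Φ k)

/-- Partial derivative `∂F/∂φ_k (Φ)` (the `k`-th column of the Jacobian `DF(Φ)`). -/
def FmapPD (k : ℕ) (Φ : ℕ →₀ ℝ) (j : ℕ) : ℝ :=
  deriv (fun t => Fmap (Φ.update k t) j) (Φ k)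

/-- Second partial derivative `∂²F/∂φ_r∂φ_s (Φ)`. -/
def FmapPD2 (r s : ℕ) (Φ : ℕ →₀ ℝ) (j : ℕ) : ℝ :=
  deriv (fun t => FmapPD s (Φ.update r t) j) (Φ r)

/-- `h(x) = 2cosh(2x) - 2`. -/
def hfun (x : ℝ) : ℝ := 2 * Real.cosh (2 * x) - 2

/-- `H(x) = 4x - sinh(2x)`. -/
def Hfun (x : ℝ) : ℝ := 4 * x - Real.sinh (2 * x)

/-- `r_Φ = arccosh(2)/2 = log(2+√3)/2 ≈ 0.658`, the unique positive solution of `h(r) = 2`. -/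
def rPhi : ℝ := Real.log (2 + Real.sqrt 3) / 2

/-- `r_c = H(r_Φ) ≈ 0.902`. -/
def rc : ℝ := Hfun rPhi

/-- The inverse `H⁻¹` of `H` on `[0, r_c]` (the preimage taken in `[0, r_Φ]`). -/
def Hinv (y : ℝ) : ℝ := Function.invFunOn Hfun (Set.Icc 0 rPhi) y

/-- `r̃_Φ = arcsinh(arccosh 2)/2 ≈ 0.544`. -/
def rPhiT : ℝ := Real.arsinh (Real.log (2 + Real.sqrt 3)) / 2

/-- `r̃_c = H(r̃_Φ) ≈ 0.861`. -/
def rcT : ℝ := Hfun rPhiT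

/-- `γ(r) = (1/2)∫₀¹ h(r + s((1/2)sinh(2r) - r)) ds`. -/
def gam (r : ℝ) : ℝ := (1 / 2) * ∫ s in (0:ℝ)..1, hfun (r + s * (Real.sinh (2 * r) / 2 - r))

/-- The real sequence space ℓ¹. -/
abbrev ell1 : Type := lp (fun _ : ℕ => ℝ) 1

theorem finsupp_memℓp (Φ : ℕ →₀ ℝ) : Memℓp (fun k => (Φ k : ℝ)) 1 := by
  apply memℓp_gen
  apply summable_of_ne_finset_zero (s := Φ.support)
  intro i hi
  simp [Finsupp.notMem_support_iff.mp hi]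

/-- A finitely supported sequence as an element of ℓ¹. -/
def toL1 (Φ : ℕ →₀ ℝ) : ell1 := ⟨fun k => Φ k, finsupp_memℓp Φ⟩

/-!
Every factor of `U(x, Ψ)` has the quaternion form `!![a, b; -conj b, conj a]`, and so does `U`.
Since `W(x)` and `e^{iψZ}` are symmetric, transposing `U(x, Ψ)` reverses `Ψ`; for symmetric `Ψ`
the matrix `U` is therefore symmetric, which forces `b` to be purely imaginary. Expanding,
`(W U W)₀₀ = x² a + 2i x √(1-x²) b - (1-x²) conj a`, whose imaginary part is `Im a`.
-/

open Matrix

def quaternionSubmonoid : Submonoid (Matrix (Fin 2) (Fin 2) ℂ) where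
  carrier := {M | M 1 1 = starRingEnd ℂ (M 0 0) ∧ M 1 0 = -starRingEnd ℂ (M 0 1)}
  one_mem' := by simp
  mul_mem' := by
    rintro A B ⟨hA₁₁, hA₁₀⟩ ⟨hB₁₁, hB₁₀⟩
    simp only [Set.mem_ofPred_eq, mul_apply, Fin.sum_univ_two, map_add, map_mul, hA₁₁, hA₁₀,
      hB₁₁, hB₁₀, map_neg, Complex.conj_conj]
    constructor <;> ring

lemma Wmat_mem_quaternionSubmonoid (x : ℝ) : Wmat x ∈ quaternionSubmonoid := by
  constructor <;> simp [Wmat, Complex.conj_ofReal]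

lemma expZ_mem_quaternionSubmonoid (ψ : ℝ) : expZ ψ ∈ quaternionSubmonoid := by
  refine ⟨?_, by simp [expZ]⟩
  simp [expZ, ← Complex.exp_conj, Complex.conj_ofReal]

lemma Umat_mem_quaternionSubmonoid (x : ℝ) (d : ℕ) (Ψ : ℕ → ℝ) :
    Umat x d Ψ ∈ quaternionSubmonoid := by
  refine mul_mem (expZ_mem_quaternionSubmonoid _) (list_prod_mem ?_)
  simp only [List.mem_map, List.mem_range]
  rintro _ ⟨j, -, rfl⟩
  exact mul_mem (Wmat_mem_quaternionSubmonoid x) (expZ_mem_quaternionSubmonoid _)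

lemma Wmat_transpose (x : ℝ) : (Wmat x)ᵀ = Wmat x := by
  ext i j
  fin_cases i <;> fin_cases j <;> rfl

lemma expZ_transpose (ψ : ℝ) : (expZ ψ)ᵀ = expZ ψ := by
  ext i j
  fin_cases i <;> fin_cases j <;> rfl

lemma Umat_zero (x : ℝ) (Ψ : ℕ → ℝ) : Umat x 0 Ψ = expZ (Ψ 0) := by
  simp [Umat]

lemma Umat_succ (x : ℝ) (d : ℕ) (Ψ : ℕ → ℝ) :
    Umat x (d + 1) Ψ = Umat x d Ψ * (Wmat x * expZ (Ψ (d + 1))) := by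
  simp [Umat, List.range_succ, mul_assoc]

lemma Umat_succ' (x : ℝ) (d : ℕ) (Ψ : ℕ → ℝ) :
    Umat x (d + 1) Ψ = expZ (Ψ 0) * Wmat x * Umat x d (fun j => Ψ (j + 1)) := by
  simp [Umat, List.range_succ_eq_map, Function.comp_def, mul_assoc]

lemma Umat_transpose_of_reverse (x : ℝ) (d : ℕ) (Ψ Ψ' : ℕ → ℝ)
    (hrev : ∀ j ≤ d, Ψ' j = Ψ (d - j)) : (Umat x d Ψ)ᵀ = Umat x d Ψ' := by
  induction d generalizing Ψ' with
  | zero => simp [Umat_zero, expZ_transpose, hrev 0 le_rfl]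
  | succ d ih =>
    rw [Umat_succ, transpose_mul, transpose_mul, Wmat_transpose, expZ_transpose,
      ih (fun j => Ψ' (j + 1)) fun j hj => by simpa using hrev (j + 1) (by omega),
      Umat_succ', hrev 0 (Nat.zero_le _), Nat.sub_zero, mul_assoc]

lemma im_Wmat_mul_mul_Wmat_apply_zero_zero {M : Matrix (Fin 2) (Fin 2) ℂ}
    (hM : M ∈ quaternionSubmonoid) (hMt : Mᵀ = M) {x : ℝ} (hx : x ∈ Set.Icc (-1 : ℝ) 1) :
    ((Wmat x * M * Wmat x) 0 0).im = (M 0 0).im := by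
  obtain ⟨hM₁₁, hM₁₀⟩ := hM
  have hM₀₁ : M 1 0 = M 0 1 := congrFun (congrFun hMt 0) 1
  have hre : (M 0 1).re = 0 := by
    have := congrArg Complex.re (hM₀₁ ▸ hM₁₀)
    simp only [Complex.neg_re, Complex.conj_re] at this
    linarith
  have hs : Real.sqrt (1 - x ^ 2) ^ 2 = 1 - x ^ 2 :=
    Real.sq_sqrt (by nlinarith [hx.1, hx.2])
  simp only [Wmat, mul_apply, Fin.sum_univ_two, of_apply, cons_val', cons_val_zero,
    cons_val_one, cons_val_fin_one, empty_val', hM₁₁, hM₀₁]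
  simp only [Complex.add_im, Complex.add_re, Complex.mul_im, Complex.mul_re, Complex.ofReal_re,
    Complex.ofReal_im, Complex.I_re, Complex.I_im, Complex.conj_re, Complex.conj_im, hre]
  linear_combination (M 0 0).im * hs

/-- Phase-factor padding: for symmetric phase factors `Ψ`,
`Im⟨0|U(x,Ψ)|0⟩ = Im⟨0|W(x)U(x,Ψ)W(x)|0⟩` for all `x ∈ [-1,1]`. -/
theorem qsp_phase_factor_padding (d : ℕ) (Ψ : ℕ → ℝ)
    (hsym : ∀ j ≤ d, Ψ j = Ψ (d - j)) :
    ∀ x ∈ Set.Icc (-1 : ℝ) 1,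
      (Umat x d Ψ 0 0).im = ((Wmat x * Umat x d Ψ * Wmat x) 0 0).im := by
  intro x hx
  exact (im_Wmat_mul_mul_Wmat_apply_zero_zero (Umat_mem_quaternionSubmonoid x d Ψ)
    (Umat_transpose_of_reverse x d Ψ Ψ hsym) hx).symm
end
end

section
/- For every d ∈ ℕ and every Ψ = (ψ₀,…,ψ_d) ∈ ℝ^{d+1}, the function x ↦ g(x,Ψ) agrees on [−1,1] with a real polynomial of degree at most d; writing g(x,Ψ) = Σ_{k=0}^{d} a_k·T_k(x) for its Chebyshev expansion, one has Σ_{k=0}^{d} |a_k| ≤ sinh(Σ_{j=0}^{d} |ψ_j|). -/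
open scoped Real
noncomputable section

/-!
Write `x = cos θ` with `θ ∈ [0, π]`, so that `W(x) = e^{iθX}`. On the combinations `U₀₀ ± U₀₁` of
the first row, i.e. in the eigenbasis of `X`, each factor `W(x) e^{iψZ}` multiplies by `e^{±iθ}`
and mixes the two combinations with weights `cos ψ` and `i sin ψ`. Hence `U₀₀ + U₀₁` is a Laurent
polynomial `∑ₘ cₘ e^{imθ}` with `|m| ≤ d`, `U₀₀ - U₀₁` is the same polynomial at `-θ`, and
`g = ∑ₘ (Im cₘ) cos mθ = ∑ₘ (Im cₘ) T_{|m|}(x)`. Each factor raises the ℓ¹ norms `I`, `R` of the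
imaginary and real parts of `c` to at most `I + |ψ| R` and `R + |ψ| I`, and
`(sinh S, cosh S)`, with `S` the running sum of the `|ψⱼ|`, dominates this recursion by the
addition formulas for `sinh` and `cosh`.
-/

open Complex Polynomial.Chebyshev

theorem Real.sinh_add_mul_cosh_le {S t : ℝ} (hS : 0 ≤ S) (ht : 0 ≤ t) :
    Real.sinh S + t * Real.cosh S ≤ Real.sinh (S + t) := by
  rw [Real.sinh_add]
  nlinarith [Real.one_le_cosh t, Real.self_le_sinh_iff.2 ht, Real.sinh_nonneg_iff.2 hS,
    Real.cosh_pos S]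

theorem Real.cosh_add_mul_sinh_le {S t : ℝ} (hS : 0 ≤ S) (ht : 0 ≤ t) :
    Real.cosh S + t * Real.sinh S ≤ Real.cosh (S + t) := by
  rw [Real.cosh_add]
  nlinarith [Real.one_le_cosh t, Real.self_le_sinh_iff.2 ht, Real.sinh_nonneg_iff.2 hS,
    Real.cosh_pos S]

theorem Finset.sum_abs_sum_fiberwise_le {ι κ : Type*} [DecidableEq κ] {s : Finset ι}
    {t : Finset κ} {g : ι → κ} (h : ∀ i ∈ s, g i ∈ t) (f : ι → ℝ) :
    ∑ k ∈ t, |∑ i ∈ s with g i = k, f i| ≤ ∑ i ∈ s, |f i| :=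
  (Finset.sum_le_sum fun _ _ => Finset.abs_sum_le_sum_abs _ _).trans_eq
    (Finset.sum_fiberwise_of_maps_to h _)

theorem Polynomial.Chebyshev.sum_mul_eval_T_eq_sum_natAbs {s : Finset ℤ} {d : ℕ}
    (hs : ∀ m ∈ s, m.natAbs ∈ Finset.range (d + 1)) (b : ℤ → ℝ) (x : ℝ) :
    ∑ m ∈ s, b m * (T ℝ m).eval x =
      ∑ k ∈ Finset.range (d + 1), (∑ m ∈ s with m.natAbs = k, b m) * (T ℝ k).eval x := by
  rw [← Finset.sum_fiberwise_of_maps_to hs]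
  refine Finset.sum_congr rfl fun k _ => ?_
  rw [Finset.sum_mul]
  refine Finset.sum_congr rfl fun m hm => ?_
  rw [← (Finset.mem_filter.1 hm).2, T_natAbs]

theorem Complex.ofReal_cos_eq_exp (r : ℝ) :
    (Real.cos r : ℂ) = (exp (I * r) + exp (-(I * r))) / 2 := by
  have h := two_cos (r : ℂ)
  rw [neg_mul, show (r : ℂ) * I = I * r from mul_comm _ _, ← ofReal_cos] at h
  linear_combination (1 / 2 : ℂ) * h

theorem Complex.I_mul_ofReal_sin_eq_exp (r : ℝ) :
    I * Real.sin r = (exp (I * r) - exp (-(I * r))) / 2 := by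
  have h := two_sin (r : ℂ)
  rw [neg_mul, show (r : ℂ) * I = I * r from mul_comm _ _, ← ofReal_sin] at h
  linear_combination (I / 2) * h + ((exp (-(I * r)) - exp (I * r)) / 2) * I_sq

namespace QSP

def fourierEval (θ : ℝ) : (ℤ →₀ ℂ) →ₗ[ℂ] ℂ :=
  Finsupp.linearCombination ℂ fun m : ℤ => exp (I * (m * θ))

lemma fourierEval_equivMapDomain (θ : ℝ) (f : ℤ ≃ ℤ) (c : ℤ →₀ ℂ) :
    fourierEval θ (c.equivMapDomain f) = ∑ m ∈ c.support, c m * exp (I * (f m * θ)) := by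
  rw [fourierEval, Finsupp.linearCombination_equivMapDomain, Finsupp.linearCombination_apply]
  rfl

lemma fourierEval_apply (θ : ℝ) (c : ℤ →₀ ℂ) :
    fourierEval θ c = ∑ m ∈ c.support, c m * exp (I * (m * θ)) := by
  simpa using fourierEval_equivMapDomain θ (Equiv.refl ℤ) c

lemma fourierEval_addRight (θ : ℝ) (n : ℤ) (c : ℤ →₀ ℂ) :
    fourierEval θ (c.equivMapDomain (Equiv.addRight n)) =
      exp (I * (n * θ)) * fourierEval θ c := by
  rw [fourierEval_equivMapDomain, fourierEval_apply, Finset.mul_sum]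
  refine Finset.sum_congr rfl fun m _ => ?_
  rw [Equiv.coe_addRight, Int.cast_add, show I * ((m + n) * θ) = I * (n * θ) + I * (m * θ) by ring,
    exp_add]
  ring

lemma fourierEval_subLeft (θ : ℝ) (n : ℤ) (c : ℤ →₀ ℂ) :
    fourierEval θ (c.equivMapDomain (Equiv.subLeft n)) =
      exp (I * (n * θ)) * fourierEval (-θ) c := by
  rw [fourierEval_equivMapDomain, fourierEval_apply, Finset.mul_sum]
  refine Finset.sum_congr rfl fun m _ => ?_
  rw [Equiv.subLeft_apply, Int.cast_sub, ofReal_neg,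
    show I * ((n - m) * θ) = I * (n * θ) + I * (m * -θ) by ring, exp_add]
  ring

/-- `m ↦ -1 - m` reflects and then shifts by `-1`: it turns `p(θ)` into `e^{-iθ} p(-θ)`. -/
def qspStep (ψ : ℝ) (c : ℤ →₀ ℂ) : ℤ →₀ ℂ :=
  (Real.cos ψ : ℂ) • c.equivMapDomain (Equiv.addRight 1) +
    (I * Real.sin ψ) • c.equivMapDomain (Equiv.subLeft (-1))

lemma fourierEval_qspStep (ψ θ : ℝ) (c : ℤ →₀ ℂ) :
    fourierEval θ (qspStep ψ c) =
      Real.cos ψ * exp (I * θ) * fourierEval θ c +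
        I * Real.sin ψ * exp (-(I * θ)) * fourierEval (-θ) c := by
  simp only [qspStep, map_add, map_smul, fourierEval_addRight, fourierEval_subLeft, smul_eq_mul,
    Int.cast_one, Int.cast_neg, one_mul, neg_one_mul, mul_neg]
  ring

def rowCoeff (Ψ : ℕ → ℝ) : ℕ → ℤ →₀ ℂ
  | 0 => Finsupp.single 0 (exp (I * Ψ 0))
  | n + 1 => qspStep (Ψ (n + 1)) (rowCoeff Ψ n)

lemma Umat_succ (x : ℝ) (d : ℕ) (Ψ : ℕ → ℝ) :
    Umat x (d + 1) Ψ = Umat x d Ψ * (Wmat x * expZ (Ψ (d + 1))) := by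
  rw [Umat, Umat, List.range_succ, List.map_append, List.prod_append, List.map_singleton,
    List.prod_singleton, ← mul_assoc]

lemma row_mul_Wmat_mul_expZ (A : Matrix (Fin 2) (Fin 2) ℂ) {x θ : ℝ} (hcos : Real.cos θ = x)
    (hsin : Real.sin θ = √(1 - x ^ 2)) (ψ : ℝ) :
    (A * (Wmat x * expZ ψ)) 0 0 + (A * (Wmat x * expZ ψ)) 0 1 =
        Real.cos ψ * exp (I * θ) * (A 0 0 + A 0 1) +
          I * Real.sin ψ * exp (-(I * θ)) * (A 0 0 - A 0 1) ∧
      (A * (Wmat x * expZ ψ)) 0 0 - (A * (Wmat x * expZ ψ)) 0 1 =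
        I * Real.sin ψ * exp (I * θ) * (A 0 0 + A 0 1) +
          Real.cos ψ * exp (-(I * θ)) * (A 0 0 - A 0 1) := by
  subst hcos
  simp only [Matrix.mul_apply, Fin.sum_univ_two, Wmat, expZ, ← hsin, Matrix.of_apply,
    Matrix.cons_val', Matrix.cons_val_zero, Matrix.cons_val_one, Matrix.empty_val',
    Matrix.cons_val_fin_one, ofReal_cos_eq_exp, I_mul_ofReal_sin_eq_exp]
  constructor <;> ring

lemma fourierEval_rowCoeff (Ψ : ℕ → ℝ) {x θ : ℝ} (hcos : Real.cos θ = x)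
    (hsin : Real.sin θ = √(1 - x ^ 2)) (n : ℕ) :
    fourierEval θ (rowCoeff Ψ n) = Umat x n Ψ 0 0 + Umat x n Ψ 0 1 ∧
      fourierEval (-θ) (rowCoeff Ψ n) = Umat x n Ψ 0 0 - Umat x n Ψ 0 1 := by
  induction n with
  | zero => simp [rowCoeff, fourierEval, Umat, expZ]
  | succ n ih =>
    obtain ⟨hplus, hminus⟩ := row_mul_Wmat_mul_expZ (Umat x n Ψ) hcos hsin (Ψ (n + 1))
    rw [rowCoeff, fourierEval_qspStep, fourierEval_qspStep, neg_neg, ih.1, ih.2, Umat_succ,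
      hplus, hminus]
    simp only [ofReal_neg, mul_neg, neg_neg, true_and]
    ring

lemma support_qspStep_subset (ψ : ℝ) (c : ℤ →₀ ℂ) :
    (qspStep ψ c).support ⊆
      c.support.map (Equiv.addRight 1).toEmbedding ∪
        c.support.map (Equiv.subLeft (-1)).toEmbedding :=
  Finsupp.support_add.trans (Finset.union_subset_union Finsupp.support_smul Finsupp.support_smul)

lemma natAbs_le_of_mem_support_rowCoeff (Ψ : ℕ → ℝ) {n : ℕ} {m : ℤ}
    (hm : m ∈ (rowCoeff Ψ n).support) : m.natAbs ≤ n := by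
  induction n generalizing m with
  | zero => simpa using Finsupp.support_single_subset hm
  | succ n ih =>
    rcases Finset.mem_union.1 (support_qspStep_subset _ _ hm) with h | h <;>
    · obtain ⟨m', hm', rfl⟩ := Finset.mem_map.1 h
      have := ih hm'
      simp only [Equiv.coe_toEmbedding, Equiv.coe_addRight, Equiv.subLeft_apply]
      omega

def imNorm (c : ℤ →₀ ℂ) : ℝ := ∑ m ∈ c.support, |(c m).im|

def reNorm (c : ℤ →₀ ℂ) : ℝ := ∑ m ∈ c.support, |(c m).re|

lemma imNorm_nonneg (c : ℤ →₀ ℂ) : 0 ≤ imNorm c := Finset.sum_nonneg fun _ _ => abs_nonneg _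

lemma reNorm_nonneg (c : ℤ →₀ ℂ) : 0 ≤ reNorm c := Finset.sum_nonneg fun _ _ => abs_nonneg _

lemma imNorm_eq_sum {c : ℤ →₀ ℂ} {s : Finset ℤ} (h : c.support ⊆ s) :
    imNorm c = ∑ m ∈ s, |(c m).im| :=
  Finset.sum_subset h fun m _ hm => by simp [Finsupp.notMem_support_iff.1 hm]

lemma reNorm_eq_sum {c : ℤ →₀ ℂ} {s : Finset ℤ} (h : c.support ⊆ s) :
    reNorm c = ∑ m ∈ s, |(c m).re| :=
  Finset.sum_subset h fun m _ hm => by simp [Finsupp.notMem_support_iff.1 hm]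

lemma imNorm_add_le (c c' : ℤ →₀ ℂ) : imNorm (c + c') ≤ imNorm c + imNorm c' := by
  classical
  rw [imNorm_eq_sum Finsupp.support_add, imNorm_eq_sum Finset.subset_union_left,
    imNorm_eq_sum Finset.subset_union_right, ← Finset.sum_add_distrib]
  exact Finset.sum_le_sum fun m _ => by simpa using abs_add_le (c m).im (c' m).im

lemma reNorm_add_le (c c' : ℤ →₀ ℂ) : reNorm (c + c') ≤ reNorm c + reNorm c' := by
  classical
  rw [reNorm_eq_sum Finsupp.support_add, reNorm_eq_sum Finset.subset_union_left,
    reNorm_eq_sum Finset.subset_union_right, ← Finset.sum_add_distrib]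
  exact Finset.sum_le_sum fun m _ => by simpa using abs_add_le (c m).re (c' m).re

lemma imNorm_smul_le (w : ℂ) (c : ℤ →₀ ℂ) :
    imNorm (w • c) ≤ |w.re| * imNorm c + |w.im| * reNorm c := by
  rw [imNorm_eq_sum Finsupp.support_smul, imNorm, reNorm, Finset.mul_sum, Finset.mul_sum,
    ← Finset.sum_add_distrib]
  refine Finset.sum_le_sum fun m _ => ?_
  simpa [abs_mul] using abs_add_le (w.re * (c m).im) (w.im * (c m).re)

lemma reNorm_smul_le (w : ℂ) (c : ℤ →₀ ℂ) :
    reNorm (w • c) ≤ |w.re| * reNorm c + |w.im| * imNorm c := by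
  rw [reNorm_eq_sum Finsupp.support_smul, imNorm, reNorm, Finset.mul_sum, Finset.mul_sum,
    ← Finset.sum_add_distrib]
  refine Finset.sum_le_sum fun m _ => ?_
  simpa [abs_mul] using abs_sub (w.re * (c m).re) (w.im * (c m).im)

lemma imNorm_equivMapDomain (f : ℤ ≃ ℤ) (c : ℤ →₀ ℂ) : imNorm (c.equivMapDomain f) = imNorm c :=
  (Finset.sum_map _ _ _).trans (by simp [imNorm])

lemma reNorm_equivMapDomain (f : ℤ ≃ ℤ) (c : ℤ →₀ ℂ) : reNorm (c.equivMapDomain f) = reNorm c :=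
  (Finset.sum_map _ _ _).trans (by simp [reNorm])

lemma imNorm_reNorm_qspStep_le (ψ : ℝ) (c : ℤ →₀ ℂ) :
    imNorm (qspStep ψ c) ≤ imNorm c + |ψ| * reNorm c ∧
      reNorm (qspStep ψ c) ≤ reNorm c + |ψ| * imNorm c := by
  have hcos : |Real.cos ψ| ≤ 1 := Real.abs_cos_le_one ψ
  have hsin : |Real.sin ψ| ≤ |ψ| := Real.abs_sin_le_abs
  constructor
  · calc imNorm (qspStep ψ c)
        ≤ |Real.cos ψ| * imNorm c + |Real.sin ψ| * reNorm c := by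
          refine (imNorm_add_le _ _).trans ?_
          have h₁ := imNorm_smul_le (Real.cos ψ) (c.equivMapDomain (Equiv.addRight 1))
          have h₂ := imNorm_smul_le (I * Real.sin ψ) (c.equivMapDomain (Equiv.subLeft (-1)))
          simp only [imNorm_equivMapDomain, reNorm_equivMapDomain, mul_re, mul_im, I_re, I_im,
            ofReal_re, ofReal_im, zero_mul, one_mul, mul_zero, sub_zero, zero_add, add_zero,
            abs_zero] at h₁ h₂
          linarith
      _ ≤ imNorm c + |ψ| * reNorm c :=
          add_le_add (mul_le_of_le_one_left (imNorm_nonneg c) hcos)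
            (mul_le_mul_of_nonneg_right hsin (reNorm_nonneg c))
  · calc reNorm (qspStep ψ c)
        ≤ |Real.cos ψ| * reNorm c + |Real.sin ψ| * imNorm c := by
          refine (reNorm_add_le _ _).trans ?_
          have h₁ := reNorm_smul_le (Real.cos ψ) (c.equivMapDomain (Equiv.addRight 1))
          have h₂ := reNorm_smul_le (I * Real.sin ψ) (c.equivMapDomain (Equiv.subLeft (-1)))
          simp only [imNorm_equivMapDomain, reNorm_equivMapDomain, mul_re, mul_im, I_re, I_im,
            ofReal_re, ofReal_im, zero_mul, one_mul, mul_zero, sub_zero, zero_add, add_zero,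
            abs_zero] at h₁ h₂
          linarith
      _ ≤ reNorm c + |ψ| * imNorm c :=
          add_le_add (mul_le_of_le_one_left (reNorm_nonneg c) hcos)
            (mul_le_mul_of_nonneg_right hsin (imNorm_nonneg c))

lemma imNorm_reNorm_rowCoeff_le (Ψ : ℕ → ℝ) (n : ℕ) :
    imNorm (rowCoeff Ψ n) ≤ Real.sinh (∑ j ∈ Finset.range (n + 1), |Ψ j|) ∧
      reNorm (rowCoeff Ψ n) ≤ Real.cosh (∑ j ∈ Finset.range (n + 1), |Ψ j|) := by
  induction n with
  | zero =>
    rw [rowCoeff, imNorm_eq_sum Finsupp.support_single_subset,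
      reNorm_eq_sum Finsupp.support_single_subset]
    simp only [Finset.sum_singleton, Finsupp.single_eq_same, zero_add, Finset.sum_range_one,
      mul_comm I, exp_ofReal_mul_I_im, exp_ofReal_mul_I_re]
    exact ⟨Real.abs_sin_le_abs.trans (Real.self_le_sinh_iff.2 (abs_nonneg _)),
      (Real.abs_cos_le_one _).trans (Real.one_le_cosh _)⟩
  | succ n ih =>
    obtain ⟨ihI, ihR⟩ := ih
    obtain ⟨hI, hR⟩ := imNorm_reNorm_qspStep_le (Ψ (n + 1)) (rowCoeff Ψ n)
    have hS : 0 ≤ ∑ j ∈ Finset.range (n + 1), |Ψ j| := Finset.sum_nonneg fun _ _ => abs_nonneg _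
    have ht := abs_nonneg (Ψ (n + 1))
    rw [rowCoeff, Finset.sum_range_succ]
    constructor
    · refine hI.trans (le_trans ?_ (Real.sinh_add_mul_cosh_le hS ht))
      gcongr
    · refine hR.trans (le_trans ?_ (Real.cosh_add_mul_sinh_le hS ht))
      gcongr

lemma gfun_eq_sum_chebyshevT (Ψ : ℕ → ℝ) (d : ℕ) {x : ℝ} (hx : x ∈ Set.Icc (-1 : ℝ) 1) :
    gfun x d Ψ = ∑ m ∈ (rowCoeff Ψ d).support, (rowCoeff Ψ d m).im * (T ℝ m).eval x := by
  set θ := Real.arccos x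
  have hcos : Real.cos θ = x := Real.cos_arccos hx.1 hx.2
  obtain ⟨hplus, hminus⟩ := fourierEval_rowCoeff Ψ hcos (Real.sin_arccos x) d
  have hU : Umat x d Ψ 0 0 =
      ∑ m ∈ (rowCoeff Ψ d).support, rowCoeff Ψ d m * (Real.cos (m * θ) : ℂ) := by
    rw [show Umat x d Ψ 0 0 =
        (fourierEval θ (rowCoeff Ψ d) + fourierEval (-θ) (rowCoeff Ψ d)) / 2 by
          rw [hplus, hminus]; ring,
      fourierEval_apply, fourierEval_apply,
      ← Finset.sum_add_distrib, Finset.sum_div]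
    refine Finset.sum_congr rfl fun m _ => ?_
    simp only [ofReal_cos_eq_exp, ofReal_neg, ofReal_mul, ofReal_intCast, mul_neg]
    ring
  rw [gfun, hU, im_sum, ← hcos]
  refine Finset.sum_congr rfl fun m _ => ?_
  rw [T_real_cos, im_mul_ofReal]

end QSP

/-- `g(·,Ψ)` agrees on `[-1,1]` with a real polynomial of degree at most `d`,
written as a Chebyshev combination `∑_{k=0}^d a_k T_k`, and the Chebyshev coefficients satisfy
`∑_{k=0}^d |a_k| ≤ sinh(∑_{j=0}^d |ψ_j|)`. -/
theorem qsp_coeff_one_norm_bound (d : ℕ) (Ψ : ℕ → ℝ) :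
    ∃ a : ℕ → ℝ,
      (∀ x ∈ Set.Icc (-1 : ℝ) 1,
        gfun x d Ψ =
          ∑ k ∈ Finset.range (d + 1), a k * (Polynomial.Chebyshev.T ℝ (k : ℤ)).eval x) ∧
      ∑ k ∈ Finset.range (d + 1), |a k| ≤
        Real.sinh (∑ j ∈ Finset.range (d + 1), |Ψ j|) := by
  set c := QSP.rowCoeff Ψ d
  have hsupp : ∀ m ∈ c.support, m.natAbs ∈ Finset.range (d + 1) := fun m hm =>
    Finset.mem_range_succ_iff.2 (QSP.natAbs_le_of_mem_support_rowCoeff Ψ hm)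
  refine ⟨fun k => ∑ m ∈ c.support with m.natAbs = k, (c m).im, fun x hx => ?_, ?_⟩
  · rw [QSP.gfun_eq_sum_chebyshevT Ψ d hx, sum_mul_eval_T_eq_sum_natAbs hsupp]
  · exact (Finset.sum_abs_sum_fiberwise_le hsupp _).trans (QSP.imNorm_reNorm_rowCoeff_le Ψ d).1
end
end

section
/- For every d ∈ ℕ, every Ψ = (ψ₀,…,ψ_d) ∈ ℝ^{d+1}, and all indices r, s ∈ {0,…,d}, the function x ↦ ∂²g(x,Ψ)/∂ψ_r∂ψ_s (the second partial derivative of Ψ ↦ g(x,Ψ) in the variables ψ_r and ψ_s) agrees on [−1,1] with a real polynomial of degree at most d, and writing it as Σ_{k=0}^{d} b_k·T_k(x) for its Chebyshev expansion, one has Σ_{k=0}^{d} |b_k| ≤ sinh(Σ_{j=0}^{d} |ψ_j|). -/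
open scoped Real
noncomputable section

/-!
Write `x = cos θ` with `sin θ ≥ 0`. Then `W(x) = exp(iθX)` and `exp(iψZ) = cos ψ + i sin ψ Z`, so
expanding the product and commuting every `Z` to the right (`Z exp(iαX) = exp(-iαX) Z`) gives
`U = ∑_S i^|S| ∏_{j ∈ S} sin ψ_j ∏_{j ∉ S} cos ψ_j · exp(i m_S θ X) Z^|S|` with `|m_S| ≤ d`.
Hence `g(cos θ)` is a sum of terms `± (∏ sin ∏ cos) · cos(m_S θ)` over odd `S`, i.e. a Chebyshev
sum of degree `≤ d`. Differentiating in `ψ_r` and `ψ_s` only turns some of the sines into cosines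
and conversely, so the coefficient of `S` is bounded by `∏_{j ∈ S ∆ {r} ∆ {s}} |ψ_j|`
(`|sin ψ| ≤ |ψ|`, `|cos ψ| ≤ 1`). As `S ↦ S ∆ {r} ∆ {s}` is a parity-preserving involution, the
ℓ¹ norm is at most `∑_{T odd} ∏_{j ∈ T} |ψ_j| ≤ sinh (∑_j |ψ_j|)`.
-/

namespace QSP

open Real Finset
open scoped symmDiff

def sinDeriv (n : ℕ) (ψ : ℝ) : ℝ := sin (ψ + n * (π / 2))

@[simp] lemma sinDeriv_zero (ψ : ℝ) : sinDeriv 0 ψ = sin ψ := by simp [sinDeriv]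

@[simp] lemma sinDeriv_one (ψ : ℝ) : sinDeriv 1 ψ = cos ψ := by simp [sinDeriv, sin_add_pi_div_two]

lemma hasDerivAt_sinDeriv (n : ℕ) (ψ : ℝ) : HasDerivAt (sinDeriv n) (sinDeriv (n + 1) ψ) ψ := by
  have h : cos (ψ + n * (π / 2)) = sinDeriv (n + 1) ψ := by
    rw [sinDeriv, ← sin_add_pi_div_two]; push_cast; ring_nf
  have hd := ((hasDerivAt_id' ψ).add_const ((n : ℝ) * (π / 2))).sin
  rwa [h, mul_one] at hd

lemma abs_sinDeriv_le (n : ℕ) (ψ : ℝ) : |sinDeriv n ψ| ≤ if Even n then |ψ| else 1 := by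
  split_ifs with hn
  · obtain ⟨m, rfl⟩ := hn
    have h : ψ + ((m + m : ℕ) : ℝ) * (π / 2) = ψ + m * π := by push_cast; ring
    rw [sinDeriv, h, sin_add_nat_mul_pi, abs_mul, abs_pow, abs_neg, abs_one, one_pow, one_mul]
    exact abs_sin_le_abs
  · exact abs_sin_le_one _

/-- `exp(iαX)`, with `X` the Pauli matrix. -/
def rot (α : ℝ) : Matrix (Fin 2) (Fin 2) ℂ :=
  !![(cos α : ℂ), Complex.I * (sin α : ℂ); Complex.I * (sin α : ℂ), (cos α : ℂ)]

def pauliZ : Matrix (Fin 2) (Fin 2) ℂ := Matrix.diagonal ![1, -1]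

lemma rot_zero : rot 0 = 1 := by
  rw [rot, Matrix.one_fin_two]; simp

lemma rot_mul_rot (α β : ℝ) : rot α * rot β = rot (α + β) := by
  ext i j
  fin_cases i <;> fin_cases j <;>
    simp [rot, Matrix.mul_apply, cos_add, sin_add, mul_mul_mul_comm Complex.I] <;> ring

lemma Wmat_cos {θ : ℝ} (hθ : 0 ≤ sin θ) : Wmat (cos θ) = rot θ := by
  rw [Wmat, rot, ← sin_sq, sqrt_sq hθ]

lemma expZ_eq (ψ : ℝ) : expZ ψ = (cos ψ : ℂ) • 1 + (Complex.I * sin ψ) • pauliZ := by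
  rw [expZ, pauliZ, Matrix.one_fin_two]
  ext i j
  fin_cases i <;> fin_cases j <;>
    simp [mul_comm Complex.I, ← neg_mul, Complex.exp_mul_I, Complex.cos_neg, Complex.sin_neg,
      Complex.ofReal_cos, Complex.ofReal_sin]

lemma pauliZ_mul_rot (α : ℝ) : pauliZ * rot α = rot (-α) * pauliZ := by
  ext i j
  fin_cases i <;> fin_cases j <;> simp [pauliZ, rot, Matrix.mul_apply]

lemma pauliZ_pow_mul_rot (k : ℕ) (α : ℝ) :
    pauliZ ^ k * rot α = rot ((-1) ^ k * α) * pauliZ ^ k := by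
  induction k generalizing α with
  | zero => simp
  | succ k ih => rw [pow_succ, mul_assoc, pauliZ_mul_rot, ← mul_assoc, ih, mul_assoc]; ring_nf

lemma rot_mul_pauliZ_pow_apply_zero_zero (α : ℝ) (k : ℕ) : (rot α * pauliZ ^ k) 0 0 = cos α := by
  simp [pauliZ, Matrix.diagonal_pow, rot]

/-- Commuting all `Z`s of the expansion of `U` to the right reverses the rotation coming from the
`(j+1)`-st signal matrix once for each chosen `Z` among the first `j + 1` phase factors. -/
def winding (d : ℕ) (S : Finset ℕ) : ℤ := ∑ j ∈ range d, (-1) ^ #{i ∈ S | i ≤ j}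

lemma natAbs_winding_le (d : ℕ) (S : Finset ℕ) : (winding d S).natAbs ≤ d := by
  have h : |winding d S| ≤ d :=
    calc |winding d S| ≤ ∑ j ∈ range d, |((-1) ^ #{i ∈ S | i ≤ j} : ℤ)| := abs_sum_le_sum_abs _ _
      _ = d := by simp
  rw [Int.abs_eq_natAbs] at h
  omega

lemma winding_succ {n : ℕ} {S : Finset ℕ} (hS : S ⊆ range (n + 1)) :
    winding (n + 1) S = winding n S + (-1) ^ #S := by
  rw [winding, sum_range_succ, ← winding, filter_true_of_mem fun i hi => ?_]
  exact Nat.lt_succ_iff.mp (mem_range.mp (hS hi))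

lemma winding_succ_insert {n : ℕ} {S : Finset ℕ} (hS : S ⊆ range (n + 1)) :
    winding (n + 1) (insert (n + 1) S) = winding n S + (-1) ^ #S := by
  have h : ∀ j ∈ range (n + 1), #{i ∈ insert (n + 1) S | i ≤ j} = #{i ∈ S | i ≤ j} := by
    intro j hj
    rw [filter_insert, if_neg (by simpa using hj)]
  rw [winding, sum_congr rfl fun j hj => by rw [h j hj], ← winding, winding_succ hS]

/-- For `o = 0` the factors are `sin ψ_j` (`j ∈ S`) and `cos ψ_j` (`j ∉ S`); `o j` counts the
derivatives taken in `ψ_j`. -/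
def trigProd (d : ℕ) (o : ℕ → ℕ) (S : Finset ℕ) (Ψ : ℕ → ℝ) : ℝ :=
  ∏ j ∈ range (d + 1), sinDeriv (o j + if j ∈ S then 0 else 1) (Ψ j)

lemma trigProd_succ {n : ℕ} {S : Finset ℕ} (hS : S ⊆ range (n + 1)) (o : ℕ → ℕ) (Ψ : ℕ → ℝ) :
    trigProd (n + 1) o S Ψ = trigProd n o S Ψ * sinDeriv (o (n + 1) + 1) (Ψ (n + 1)) := by
  rw [trigProd, prod_range_succ, if_neg fun h => by simpa using hS h, trigProd]

lemma trigProd_succ_insert (n : ℕ) (S : Finset ℕ) (o : ℕ → ℕ) (Ψ : ℕ → ℝ) :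
    trigProd (n + 1) o (insert (n + 1) S) Ψ =
      trigProd n o S Ψ * sinDeriv (o (n + 1)) (Ψ (n + 1)) := by
  rw [trigProd, prod_range_succ, if_pos (mem_insert_self _ _), add_zero, trigProd]
  congr 1
  refine prod_congr rfl fun j hj => ?_
  simp [(mem_range.mp hj).ne]

theorem Umat_cos_eq_sum {θ : ℝ} (hθ : 0 ≤ sin θ) (d : ℕ) (Ψ : ℕ → ℝ) :
    Umat (cos θ) d Ψ = ∑ S ∈ (range (d + 1)).powerset,
      (Complex.I ^ #S * (trigProd d 0 S Ψ : ℂ)) • (rot (winding d S * θ) * pauliZ ^ #S) := by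
  induction d with
  | zero =>
    rw [show range (0 + 1) = insert 0 ∅ from rfl, sum_powerset_insert (notMem_empty 0)]
    simp [Umat, trigProd, winding, rot_zero, expZ_eq, add_comm]
  | succ n ih =>
    have hU : Umat (cos θ) (n + 1) Ψ = Umat (cos θ) n Ψ * (rot θ * expZ (Ψ (n + 1))) := by
      simp [Umat, List.range_succ, mul_assoc, Wmat_cos hθ]
    rw [hU, ih, sum_mul, range_add_one (n := n + 1), sum_powerset_insert (by simp),
      ← sum_add_distrib]
    refine sum_congr rfl fun S hS => ?_
    have hS : S ⊆ range (n + 1) := mem_powerset.mp hS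
    have hnS : n + 1 ∉ S := fun h => by simpa using hS h
    have hrot : rot (winding n S * θ) * pauliZ ^ #S * rot θ =
        rot ((winding n S + (-1) ^ #S : ℤ) * θ) * pauliZ ^ #S := by
      rw [mul_assoc, pauliZ_pow_mul_rot, ← mul_assoc, rot_mul_rot]; push_cast; ring_nf
    simp only [expZ_eq, mul_add, mul_smul_comm, smul_mul_assoc, mul_one, ← mul_assoc, hrot,
      smul_smul]
    rw [mul_assoc _ (pauliZ ^ #S), ← pow_succ, trigProd_succ hS, trigProd_succ_insert,
      winding_succ hS, winding_succ_insert hS, card_insert_of_notMem hnS]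
    simp only [Pi.zero_apply, zero_add, sinDeriv_zero, sinDeriv_one]
    push_cast
    ring_nf

theorem gfun_cos_eq_sum {θ : ℝ} (hθ : 0 ≤ sin θ) (d : ℕ) (Ψ : ℕ → ℝ) :
    gfun (cos θ) d Ψ = ∑ S ∈ (range (d + 1)).powerset,
      (Complex.I ^ #S).im * trigProd d 0 S Ψ * cos (winding d S * θ) := by
  rw [gfun, Umat_cos_eq_sum hθ, Matrix.sum_apply, Complex.im_sum]
  refine sum_congr rfl fun S _ => ?_
  rw [Matrix.smul_apply, rot_mul_pauliZ_pow_apply_zero_zero, smul_eq_mul, mul_assoc,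
    ← Complex.ofReal_mul, Complex.im_mul_ofReal, mul_assoc]

lemma hasDerivAt_trigProd_update {d s : ℕ} (hs : s ≤ d) (o : ℕ → ℕ) (S : Finset ℕ)
    (Ψ : ℕ → ℝ) :
    HasDerivAt (fun t => trigProd d o S (Function.update Ψ s t))
      (trigProd d (o + Pi.single s 1) S Ψ) (Ψ s) := by
  have hs' : s ∈ range (d + 1) := mem_range.mpr (Nat.lt_succ_of_le hs)
  set n := if s ∈ S then 0 else 1
  set C := ∏ j ∈ (range (d + 1)).erase s, sinDeriv (o j + if j ∈ S then 0 else 1) (Ψ j)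
  have hrest : ∀ (o' : ℕ → ℕ) (Ψ' : ℕ → ℝ), (∀ j ≠ s, o' j = o j ∧ Ψ' j = Ψ j) →
      trigProd d o' S Ψ' = sinDeriv (o' s + n) (Ψ' s) * C := by
    intro o' Ψ' h
    rw [trigProd, ← mul_prod_erase _ _ hs']
    congr 1
    refine prod_congr rfl fun j hj => ?_
    rw [(h j (ne_of_mem_erase hj)).1, (h j (ne_of_mem_erase hj)).2]
  have hfun : (fun t => trigProd d o S (Function.update Ψ s t)) =
      fun t => sinDeriv (o s + n) t * C :=
    funext fun t => by
      rw [hrest o _ fun j hj => ⟨rfl, Function.update_of_ne hj _ _⟩, Function.update_self]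
  rw [hfun, hrest _ Ψ fun j hj => ⟨by simp [hj], rfl⟩]
  simpa [add_right_comm] using (hasDerivAt_sinDeriv (o s + n) (Ψ s)).mul_const C

lemma deriv_sum_trigProd_update {d s : ℕ} (hs : s ≤ d) (P : Finset (Finset ℕ))
    (c w : Finset ℕ → ℝ) (o : ℕ → ℕ) (Ψ : ℕ → ℝ) :
    deriv (fun t => ∑ S ∈ P, c S * trigProd d o S (Function.update Ψ s t) * w S) (Ψ s) =
      ∑ S ∈ P, c S * trigProd d (o + Pi.single s 1) S Ψ * w S :=
  (HasDerivAt.fun_sum fun S _ =>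
    ((hasDerivAt_trigProd_update hs o S Ψ).const_mul (c S)).mul_const (w S)).deriv

theorem gfunPD2_cos_eq_sum {θ : ℝ} (hθ : 0 ≤ sin θ) {d r s : ℕ} (hr : r ≤ d) (hs : s ≤ d)
    (Ψ : ℕ → ℝ) :
    gfunPD2 (cos θ) d r s Ψ = ∑ S ∈ (range (d + 1)).powerset,
      (Complex.I ^ #S).im * trigProd d (Pi.single s 1 + Pi.single r 1) S Ψ *
        cos (winding d S * θ) := by
  have hPD : ∀ Ψ, gfunPD (cos θ) d s Ψ = ∑ S ∈ (range (d + 1)).powerset,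
      (Complex.I ^ #S).im * trigProd d (Pi.single s 1) S Ψ * cos (winding d S * θ) := by
    intro Ψ
    simp only [gfunPD, gfun_cos_eq_sum hθ]
    rw [deriv_sum_trigProd_update hs, zero_add]
  simp only [gfunPD2, hPD]
  exact deriv_sum_trigProd_update hr _ _ _ _ Ψ

lemma abs_im_I_pow_le (k : ℕ) : |(Complex.I ^ k).im| ≤ if Odd k then 1 else 0 := by
  rcases Nat.even_or_odd' k with ⟨m, rfl | rfl⟩
  · rw [if_neg (Nat.not_odd_iff_even.mpr (even_two_mul m)), pow_mul, Complex.I_sq]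
    rcases neg_one_pow_eq_or ℂ m with h | h <;> simp [h]
  · rw [if_pos (odd_two_mul_add_one m), pow_succ, pow_mul, Complex.I_sq]
    rcases neg_one_pow_eq_or ℂ m with h | h <;> simp [h]

lemma abs_trigProd_le (d : ℕ) (o : ℕ → ℕ) (S : Finset ℕ) (Ψ : ℕ → ℝ) :
    |trigProd d o S Ψ| ≤ ∏ j ∈ range (d + 1) with Even (o j + if j ∈ S then 0 else 1), |Ψ j| := by
  rw [trigProd, abs_prod, prod_filter]
  exact prod_le_prod (fun _ _ => abs_nonneg _) fun j _ => abs_sinDeriv_le _ _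

lemma filter_even_hessian_order_eq_symmDiff {d r s : ℕ} (hr : r ≤ d) (hs : s ≤ d) {S : Finset ℕ}
    (hS : S ⊆ range (d + 1)) :
    {j ∈ range (d + 1) | Even ((Pi.single s 1 + Pi.single r 1 : ℕ → ℕ) j +
      if j ∈ S then 0 else 1)} = S ∆ ({r} ∆ {s}) := by
  ext j
  by_cases hj : j ∈ range (d + 1)
  · simp only [mem_filter, hj, true_and, Pi.add_apply, Pi.single_apply, mem_symmDiff,
      mem_singleton]
    by_cases hjS : j ∈ S <;> by_cases hjr : j = r <;> by_cases hjs : j = s <;>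
      simp_all [Nat.even_iff]
  · have hjS : j ∉ S := fun h => hj (hS h)
    simp only [mem_range] at hj
    simp [mem_symmDiff, hj, hjS]
    omega

lemma card_symmDiff_add_two_mul_card_inter {α : Type*} [DecidableEq α] (S T : Finset α) :
    #(S ∆ T) + 2 * #(S ∩ T) = #S + #T := by
  rw [Finset.symmDiff_def, card_union_of_disjoint disjoint_sdiff_sdiff,
    ← card_sdiff_add_card_inter S T, ← card_sdiff_add_card_inter T S, inter_comm T S]
  ring

lemma odd_card_symmDiff_iff {α : Type*} [DecidableEq α] {D : Finset α} (hD : Even #D)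
    (S : Finset α) : Odd #(S ∆ D) ↔ Odd #S := by
  have h := card_symmDiff_add_two_mul_card_inter S D
  rw [Nat.even_iff] at hD
  rw [Nat.odd_iff, Nat.odd_iff]
  omega

lemma even_card_symmDiff_singleton {α : Type*} [DecidableEq α] (a b : α) :
    Even #({a} ∆ {b} : Finset α) := by
  have h := card_symmDiff_add_two_mul_card_inter {a} {b}
  simp only [card_singleton] at h
  rw [Nat.even_iff]
  omega

lemma sum_powerset_symmDiff {α M : Type*} [DecidableEq α] [AddCommMonoid M] {A D : Finset α}
    (hD : D ⊆ A) (f : Finset α → M) :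
    ∑ S ∈ A.powerset, f (S ∆ D) = ∑ S ∈ A.powerset, f S := by
  have hmaps : ∀ S ∈ A.powerset, S ∆ D ∈ A.powerset := fun S hS =>
    mem_powerset.mpr (symmDiff_le_sup.trans (sup_le (mem_powerset.mp hS) hD))
  exact sum_nbij' (· ∆ D) (· ∆ D) hmaps hmaps (fun S _ => symmDiff_symmDiff_cancel_right D S)
    (fun S _ => symmDiff_symmDiff_cancel_right D S) fun _ _ => rfl

lemma sum_powerset_insert_filter_prod {α : Type*} [DecidableEq α] {c : α} {A : Finset α}
    (hc : c ∉ A) (p : ℕ → Prop) [DecidablePred p] (a : α → ℝ) :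
    ∑ T ∈ (insert c A).powerset with p #T, ∏ j ∈ T, a j =
      ∑ T ∈ A.powerset with p #T, ∏ j ∈ T, a j +
        a c * ∑ T ∈ A.powerset with p (#T + 1), ∏ j ∈ T, a j := by
  rw [sum_filter, sum_filter, sum_filter, sum_powerset_insert hc, mul_sum]
  congr 1
  refine sum_congr rfl fun T hT => ?_
  have hcT : c ∉ T := fun h => hc (mem_powerset.mp hT h)
  rw [card_insert_of_notMem hcT, prod_insert hcT]
  split_ifs <;> simp

lemma sum_powerset_odd_even_prod_le {α : Type*} [DecidableEq α] (A : Finset α) {a : α → ℝ}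
    (ha : ∀ j, 0 ≤ a j) :
    ∑ T ∈ A.powerset with Odd #T, ∏ j ∈ T, a j ≤ sinh (∑ j ∈ A, a j) ∧
      ∑ T ∈ A.powerset with Even #T, ∏ j ∈ T, a j ≤ cosh (∑ j ∈ A, a j) := by
  induction A using Finset.induction_on with
  | empty => simp [filter_singleton]
  | insert c A hc ih =>
    have hodd : ∀ n, Odd (n + 1) ↔ Even n := fun n => by simp [Nat.odd_add_one]
    have heven : ∀ n, Even (n + 1) ↔ Odd n := fun n => by simp [Nat.even_add_one]
    simp only [sum_powerset_insert_filter_prod hc, hodd, heven, sum_insert hc, sinh_add, cosh_add]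
    have hsinh : 0 ≤ sinh (∑ j ∈ A, a j) := sinh_nonneg_iff.mpr (sum_nonneg fun j _ => ha j)
    have hcosh : 0 ≤ cosh (∑ j ∈ A, a j) := (cosh_pos _).le
    have hac : a c ≤ sinh (a c) := self_le_sinh_iff.mpr (ha c)
    -- the addition formulas, with `a c ≤ sinh (a c)` and `1 ≤ cosh (a c)`
    constructor <;> nlinarith [ih.1, ih.2, one_le_cosh (a c), ha c]

theorem exists_chebyshev_expansion_of_sum_cos {ι : Type*} (P : Finset ι) (c : ι → ℝ) (m : ι → ℤ)
    {d : ℕ} (hm : ∀ i ∈ P, (m i).natAbs ≤ d) :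
    ∃ b : ℕ → ℝ,
      (∀ θ : ℝ, ∑ i ∈ P, c i * cos (m i * θ) =
        ∑ k ∈ range (d + 1), b k * (Polynomial.Chebyshev.T ℝ (k : ℤ)).eval (cos θ)) ∧
      ∑ k ∈ range (d + 1), |b k| ≤ ∑ i ∈ P, |c i| := by
  have hmaps : ∀ i ∈ P, (m i).natAbs ∈ range (d + 1) := fun i hi =>
    mem_range.mpr (Nat.lt_succ_of_le (hm i hi))
  refine ⟨fun k => ∑ i ∈ P with (m i).natAbs = k, c i, fun θ => ?_, ?_⟩
  · rw [← sum_fiberwise_of_maps_to hmaps]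
    refine sum_congr rfl fun k _ => ?_
    rw [sum_mul]
    refine sum_congr rfl fun i hi => ?_
    rw [← (mem_filter.mp hi).2, Polynomial.Chebyshev.T_natAbs, Polynomial.Chebyshev.T_real_cos]
  · calc ∑ k ∈ range (d + 1), |∑ i ∈ P with (m i).natAbs = k, c i|
        ≤ ∑ k ∈ range (d + 1), ∑ i ∈ P with (m i).natAbs = k, |c i| :=
          sum_le_sum fun k _ => abs_sum_le_sum_abs _ _
      _ = ∑ i ∈ P, |c i| := sum_fiberwise_of_maps_to hmaps _

theorem sum_abs_hessian_coeff_le_sinh {d r s : ℕ} (hr : r ≤ d) (hs : s ≤ d) (Ψ : ℕ → ℝ) :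
    ∑ S ∈ (range (d + 1)).powerset,
        |(Complex.I ^ #S).im * trigProd d (Pi.single s 1 + Pi.single r 1) S Ψ| ≤
      sinh (∑ j ∈ range (d + 1), |Ψ j|) := by
  have hD : {r} ∆ {s} ⊆ range (d + 1) := symmDiff_le_sup.trans (sup_le
    (singleton_subset_iff.mpr (mem_range.mpr (Nat.lt_succ_of_le hr)))
    (singleton_subset_iff.mpr (mem_range.mpr (Nat.lt_succ_of_le hs))))
  let f : Finset ℕ → ℝ := fun T => if Odd #T then ∏ j ∈ T, |Ψ j| else 0
  have hterm : ∀ S ∈ (range (d + 1)).powerset,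
      |(Complex.I ^ #S).im * trigProd d (Pi.single s 1 + Pi.single r 1) S Ψ| ≤
        f (S ∆ ({r} ∆ {s})) := by
    intro S hS
    have hodd := odd_card_symmDiff_iff (even_card_symmDiff_singleton r s) S
    calc _ ≤ (if Odd #S then 1 else 0) * ∏ j ∈ S ∆ ({r} ∆ {s}), |Ψ j| := by
          rw [abs_mul, ← filter_even_hessian_order_eq_symmDiff hr hs (mem_powerset.mp hS)]
          exact mul_le_mul (abs_im_I_pow_le _) (abs_trigProd_le _ _ _ _) (abs_nonneg _)
            (by split_ifs <;> norm_num)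
      _ = f (S ∆ ({r} ∆ {s})) := by simp only [f, hodd]; split_ifs <;> simp
  calc _ ≤ ∑ S ∈ (range (d + 1)).powerset, f (S ∆ ({r} ∆ {s})) := sum_le_sum hterm
    _ = ∑ S ∈ (range (d + 1)).powerset, f S := sum_powerset_symmDiff hD f
    _ = ∑ S ∈ (range (d + 1)).powerset with Odd #S, ∏ j ∈ S, |Ψ j| := (sum_filter _ _).symm
    _ ≤ _ := (sum_powerset_odd_even_prod_le _ fun j => abs_nonneg (Ψ j)).1

end QSP

/-- for `r, s ∈ {0,…,d}`, `x ↦ ∂²g(x,Ψ)/∂ψ_r∂ψ_s` agrees on `[-1,1]` with a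
real polynomial of degree at most `d`, written as `∑_{k=0}^d b_k T_k`, with
`∑_{k=0}^d |b_k| ≤ sinh(∑_{j=0}^d |ψ_j|)`. -/
theorem qsp_hessian_coeff_one_norm_bound (d : ℕ) (Ψ : ℕ → ℝ) (r s : ℕ)
    (hr : r ≤ d) (hs : s ≤ d) :
    ∃ b : ℕ → ℝ,
      (∀ x ∈ Set.Icc (-1 : ℝ) 1,
        gfunPD2 x d r s Ψ =
          ∑ k ∈ Finset.range (d + 1), b k * (Polynomial.Chebyshev.T ℝ (k : ℤ)).eval x) ∧
      ∑ k ∈ Finset.range (d + 1), |b k| ≤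
        Real.sinh (∑ j ∈ Finset.range (d + 1), |Ψ j|) := by
  obtain ⟨b, hb, hb_le⟩ := QSP.exists_chebyshev_expansion_of_sum_cos
    (Finset.range (d + 1)).powerset
    (fun S => (Complex.I ^ S.card).im * QSP.trigProd d (Pi.single s 1 + Pi.single r 1) S Ψ)
    (QSP.winding d) fun S _ => QSP.natAbs_winding_le d S
  refine ⟨b, fun x hx => ?_, hb_le.trans (QSP.sum_abs_hessian_coeff_le_sinh hr hs Ψ)⟩
  have hθ : 0 ≤ Real.sin (Real.arccos x) := by rw [Real.sin_arccos]; positivity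
  rw [← Real.cos_arccos hx.1 hx.2, QSP.gfunPD2_cos_eq_sum hθ hr hs, ← hb]
end
end

section
/- For every k ∈ ℕ and every x ∈ [−1,1], the partial derivative ∂g(x,Φ)/∂φ_k evaluated at Φ = 0 equals 2·T_{2k}(x). Equivalently, ∂F/∂φ_k(0) = 2·e_k for every k ∈ ℕ, i.e. the Jacobian of F at 0 is twice the identity: DF(0) = 2·Id. -/
open scoped Real
noncomputable section

/-!
For `x = cos θ` the signal matrix is `W(x) = exp(iθX)`, so the `(0,0)` entry of `W(x)^m` is
`cos(mθ) = T_m(x)`. Setting `φ_k = t` and all other reduced phases to zero gives the full phase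
factors `(t, 0, …, 0, t)` of length `2k + 1` (just `(2t)` if `k = 0`); since `e^{itZ}` is diagonal,
`g(x, t e_k) = Im (T_{2k}(x) e^{2it}) = sin(2t) T_{2k}(x)`. Orthogonality of the `cos(2jθ)` on
`[0, 2π]` turns this into `F(t e_k) = sin(2t) e_k`, and both claims follow by differentiating at `0`.
-/

open Complex Polynomial.Chebyshev

/-- `exp(iθX)` for the Pauli matrix `X`. -/
def expX (θ : ℝ) : Matrix (Fin 2) (Fin 2) ℂ :=
  !![(Real.cos θ : ℂ), I * Real.sin θ; I * Real.sin θ, (Real.cos θ : ℂ)]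

lemma expX_zero : expX 0 = 1 := by
  simp [expX, Matrix.one_fin_two]

lemma expX_add (a b : ℝ) : expX (a + b) = expX a * expX b := by
  ext i j
  fin_cases i <;> fin_cases j <;>
    simp [expX, Matrix.mul_apply, Fin.sum_univ_two, Real.cos_add, Real.sin_add] <;>
    first | ring1 | linear_combination -(sin (a:ℂ) * sin (b:ℂ)) * I_sq

lemma expX_pow (θ : ℝ) (m : ℕ) : expX θ ^ m = expX (m * θ) := by
  induction m with
  | zero => simp [expX_zero]
  | succ m ih => rw [pow_succ, ih, ← expX_add, Nat.cast_succ, add_one_mul]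

lemma Wmat_eq_expX_arccos {x : ℝ} (hx : x ∈ Set.Icc (-1 : ℝ) 1) :
    Wmat x = expX (Real.arccos x) := by
  rw [Wmat, expX, Real.sin_arccos, Real.cos_arccos hx.1 hx.2]

lemma Wmat_pow_apply_zero_zero {x : ℝ} (hx : x ∈ Set.Icc (-1 : ℝ) 1) (m : ℕ) :
    (Wmat x ^ m) 0 0 = (T ℝ m).eval x := by
  conv_rhs => rw [← Real.cos_arccos hx.1 hx.2]
  rw [T_real_cos, Wmat_eq_expX_arccos hx, expX_pow]
  simp [expX]

lemma expZ_zero : expZ 0 = 1 := by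
  simp [expZ, Matrix.one_fin_two]

lemma expZ_add (a b : ℝ) : expZ (a + b) = expZ a * expZ b := by
  simp [expZ, mul_add, Complex.exp_add, mul_comm]

lemma expZ_mul_mul_expZ_apply_zero_zero (t : ℝ) (M : Matrix (Fin 2) (Fin 2) ℂ) :
    (expZ t * M * expZ t) 0 0 = M 0 0 * exp ((2 * t : ℝ) * I) := by
  rw [Matrix.mul_apply, Fin.sum_univ_two, Matrix.mul_apply, Fin.sum_univ_two,
    Matrix.mul_apply, Fin.sum_univ_two]
  simp [expZ]
  rw [mul_comm (cexp _) (M 0 0), mul_assoc, ← Complex.exp_add]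
  ring_nf

lemma Umat_succ_of_forall_eq_zero {x : ℝ} {d : ℕ} {Ψ : ℕ → ℝ} (h : ∀ j < d, Ψ (j + 1) = 0) :
    Umat x (d + 1) Ψ = expZ (Ψ 0) * Wmat x ^ (d + 1) * expZ (Ψ (d + 1)) := by
  have hinner : ((List.range d).map fun j => Wmat x * expZ (Ψ (j + 1))) =
      List.replicate d (Wmat x) := by
    rw [List.eq_replicate_iff]
    simp +contextual [h, expZ_zero]
  rw [Umat, List.range_succ, List.map_append, List.prod_append, hinner, List.prod_replicate]
  simp [pow_succ, mul_assoc]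

lemma nOf_single {k : ℕ} {t : ℝ} (ht : t ≠ 0) : nOf (Finsupp.single k t) = k + 1 := by
  simp [nOf, Finsupp.support_single k ht]

lemma Umat_pad_single (x t : ℝ) (k : ℕ) :
    Umat x (2 * k) (pad (Finsupp.single k t) (k + 1)) = expZ t * Wmat x ^ (2 * k) * expZ t := by
  cases k with
  | zero => simp [Umat, pad, ← expZ_add, two_mul]
  | succ k =>
    have hfirst : pad (Finsupp.single (k + 1) t) (k + 1 + 1) 0 = t := by simp [pad]
    have hlast : pad (Finsupp.single (k + 1) t) (k + 1 + 1) (2 * k + 1 + 1) = t := by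
      rw [pad, if_neg (by omega), if_neg (by omega),
        show 2 * k + 1 + 1 + 1 - (k + 1 + 1) = k + 1 by omega, Finsupp.single_eq_same]
    rw [show 2 * (k + 1) = (2 * k + 1) + 1 by ring, Umat_succ_of_forall_eq_zero, hfirst, hlast]
    intro j hj
    rw [pad]
    split_ifs
    · exact Finsupp.single_eq_of_ne (by omega)
    · rw [Finsupp.single_eq_of_ne (by omega), mul_zero]
    · exact Finsupp.single_eq_of_ne (by omega)

lemma gred_single {x : ℝ} (hx : x ∈ Set.Icc (-1 : ℝ) 1) (k : ℕ) (t : ℝ) :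
    gred x (Finsupp.single k t) = Real.sin (2 * t) * (T ℝ (2 * (k : ℤ))).eval x := by
  rcases eq_or_ne t 0 with rfl | ht
  · simp [gred, nOf, gfun, Umat, pad, expZ_zero]
  rw [gred, gfun, nOf_single ht, show 2 * (k + 1) - 2 = 2 * k by omega,
    Umat_pad_single, expZ_mul_mul_expZ_apply_zero_zero, Wmat_pow_apply_zero_zero hx,
    im_ofReal_mul, exp_ofReal_mul_I_im]
  push_cast
  ring

lemma integral_cos_int_mul (c : ℤ) :
    ∫ θ in (0 : ℝ)..(2 * π), Real.cos (c * θ) = if c = 0 then 2 * π else 0 := by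
  split_ifs with hc
  · simp [hc]
  · have hc' : (c : ℝ) ≠ 0 := Int.cast_ne_zero.mpr hc
    rw [intervalIntegral.integral_comp_mul_left Real.cos hc', integral_cos,
      show (c : ℝ) * (2 * π) = ((2 * c : ℤ) : ℝ) * π by push_cast; ring, Real.sin_int_mul_pi]
    simp

lemma integral_cos_two_mul_mul_cos_two_mul (m n : ℕ) :
    ∫ θ in (0 : ℝ)..(2 * π), Real.cos (2 * m * θ) * Real.cos (2 * n * θ) =
      if m = n then (if m = 0 then 2 * π else π) else 0 := by
  have hprod : ∀ θ : ℝ, Real.cos (2 * m * θ) * Real.cos (2 * n * θ) =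
      (Real.cos (((2 * m - 2 * n : ℤ) : ℝ) * θ) +
        Real.cos (((2 * m + 2 * n : ℤ) : ℝ) * θ)) / 2 := by
    intro θ
    push_cast
    rw [sub_mul, add_mul, ← Real.two_mul_cos_mul_cos]
    ring
  have hint : ∀ c : ℝ,
      IntervalIntegrable (fun θ => Real.cos (c * θ)) MeasureTheory.volume 0 (2 * π) :=
    fun c => (by fun_prop : Continuous fun θ => Real.cos (c * θ)).intervalIntegrable _ _
  simp only [hprod, intervalIntegral.integral_div,
    intervalIntegral.integral_add (hint _) (hint _), integral_cos_int_mul]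
  split_ifs <;> first | ring1 | (exfalso; omega)

lemma chebCoeff_congr {f g : ℝ → ℝ} (h : Set.EqOn f g (Set.Icc (-1) 1)) :
    chebCoeff f = chebCoeff g := by
  ext j
  simp only [chebCoeff, h ⟨Real.neg_one_le_cos _, Real.cos_le_one _⟩]

lemma chebCoeff_const_mul (c : ℝ) (f : ℝ → ℝ) (j : ℕ) :
    chebCoeff (fun x => c * f x) j = c * chebCoeff f j := by
  simp only [chebCoeff, mul_assoc, intervalIntegral.integral_const_mul]
  ring

lemma chebCoeff_T_two_mul (k j : ℕ) :
    chebCoeff (fun x => (T ℝ (2 * (k : ℤ))).eval x) j = if j = k then 1 else 0 := by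
  have hT : ∀ θ : ℝ, (T ℝ (2 * (k : ℤ))).eval (Real.cos θ) = Real.cos (2 * k * θ) := by
    intro θ
    rw [T_real_cos]
    push_cast
    rfl
  simp only [chebCoeff, hT, integral_cos_two_mul_mul_cos_two_mul k j]
  rcases eq_or_ne j k with rfl | hjk
  · simp only [if_true]
    split_ifs <;> field_simp
  · simp [hjk, hjk.symm]

lemma Fmap_single (k : ℕ) (t : ℝ) (j : ℕ) :
    Fmap (Finsupp.single k t) j = Real.sin (2 * t) * if j = k then 1 else 0 := by
  rw [Fmap, chebCoeff_congr fun x hx => gred_single hx k t, chebCoeff_const_mul,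
    chebCoeff_T_two_mul]

lemma deriv_sin_two_mul_mul_zero (c : ℝ) : deriv (fun t => Real.sin (2 * t) * c) 0 = 2 * c := by
  have h := ((Real.hasDerivAt_sin _).comp 0 ((hasDerivAt_id (0 : ℝ)).const_mul 2)).mul_const c
  simpa using h.deriv

/-- `∂g(x,Φ)/∂φ_k` at `Φ = 0` equals `2 T_{2k}(x)` on `[-1,1]`;
equivalently `∂F/∂φ_k(0) = 2 e_k`, i.e. `DF(0) = 2 Id`. -/
theorem DF_at_zero (k : ℕ) :
    (∀ x ∈ Set.Icc (-1 : ℝ) 1,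
      gredPD k x 0 = 2 * (Polynomial.Chebyshev.T ℝ (2 * (k : ℤ))).eval x) ∧
    (∀ j, FmapPD k 0 j = if j = k then 2 else 0) := by
  refine ⟨fun x hx => ?_, fun j => ?_⟩
  · simp only [gredPD, Finsupp.coe_zero, Pi.zero_apply, Finsupp.zero_update,
      gred_single hx, deriv_sin_two_mul_mul_zero]
  · simp only [FmapPD, Finsupp.coe_zero, Pi.zero_apply, Finsupp.zero_update,
      Fmap_single]
    rw [deriv_sin_two_mul_mul_zero, mul_ite, mul_one, mul_zero]
end
end

section
/- Let Φ be a finitely supported real sequence with ‖Φ‖₁ ≤ r_Φ, and let n be the effective length of Φ (the smallest n with φ_k = 0 for all k ≥ n). Then the effective length of F(Φ) equals n; that is, F(Φ)_j = 0 for all j ≥ n, and if n ≥ 1 then F(Φ)_{n−1} ≠ 0. -/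
open scoped Real
noncomputable section

/-!
Put `x = cos θ`. Since `√(1 - cos² θ) = |sin θ|`, the signal `W(cos θ)` is, up to conjugation by
`Z` (which fixes every `e^{iψZ}` and the `(0,0)` entry), `e^{iθ} P₊ + e^{-iθ} P₋` with `P±` the
projections onto `(1, ±1)/√2`. So `U(cos θ, Ψ)` is a Laurent polynomial of degree `d` in `e^{iθ}`
with matrix coefficients, and orthogonality of `e^{ikθ}` against `cos (2jθ)` on `[0, 2π]` reads
`F(Φ)_j` off its coefficients at `e^{±2ijθ}`. These vanish for `2j > d = 2n - 2`; the extreme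
ones are `e^{iψ₀} ∏ₖ (P± e^{iψₖZ})`, which `P e^{iψZ} P = cos ψ • P` collapses to
`e^{i(ψ₀ + ψ_d)}/2 · ∏_{0<k<d} cos ψₖ`. Hence `F(Φ)_{n-1} = sin (2φ_{n-1}) ∏_{0<k<d} cos ψₖ`, and
`‖Φ‖₁ ≤ r_Φ` keeps every `|ψₖ| ≤ 2 r_Φ < π/2`, so neither factor vanishes.
-/

open Complex Matrix AddMonoidAlgebra

theorem integral_exp_int_mul_I (l : ℤ) :
    ∫ θ in (0:ℝ)..2 * π, exp (l * θ * I) = if l = 0 then 2 * π else 0 := by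
  split_ifs with hl
  · simp [hl]
  · have hc : (l * I : ℂ) ≠ 0 := mul_ne_zero (by exact_mod_cast hl) I_ne_zero
    simp_rw [mul_right_comm _ _ I]
    rw [integral_exp_mul_complex hc]
    push_cast
    rw [show (l : ℂ) * I * (2 * π) = l * (2 * π * I) by ring, exp_int_mul_two_pi_mul_I]
    simp

theorem integral_exp_int_mul_I_mul_cos (k m : ℤ) :
    ∫ θ in (0:ℝ)..2 * π, exp (k * θ * I) * Real.cos (m * θ) =
      π * ((if k = -m then 1 else 0) + if k = m then 1 else 0) := by
  have hcos : ∀ θ : ℝ, exp (k * θ * I) * Real.cos (m * θ) =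
      (exp ((k + m : ℤ) * θ * I) + exp ((k - m : ℤ) * θ * I)) / 2 := by
    intro θ
    rw [ofReal_cos, cos, mul_div_assoc', mul_add, ← exp_add, ← exp_add]
    push_cast
    ring_nf
  simp_rw [hcos]
  rw [intervalIntegral.integral_div, intervalIntegral.integral_add
    (by apply Continuous.intervalIntegrable; fun_prop)
    (by apply Continuous.intervalIntegrable; fun_prop),
    integral_exp_int_mul_I, integral_exp_int_mul_I]
  simp only [add_eq_zero_iff_eq_neg, sub_eq_zero]
  split_ifs <;> push_cast <;> ring

theorem integral_im_sum_mul_cos (s : Finset ℤ) (c : ℤ → ℂ) (hc : ∀ k ∉ s, c k = 0) (m : ℤ) :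
    ∫ θ in (0:ℝ)..2 * π, (∑ k ∈ s, c k * exp (k * θ * I)).im * Real.cos (m * θ) =
      π * (c m + c (-m)).im := by
  have hmem : ∀ l, (if l ∈ s then c l * π else 0) = c l * π := fun l => by
    split_ifs with h
    · rfl
    · rw [hc l h, zero_mul]
  calc _ = ∫ θ in (0:ℝ)..2 * π, (∑ k ∈ s, c k * (exp (k * θ * I) * Real.cos (m * θ))).im := by
        congr 1
        ext θ
        rw [← im_mul_ofReal, Finset.sum_mul]
        simp_rw [mul_assoc]
    _ = (∫ θ in (0:ℝ)..2 * π, ∑ k ∈ s, c k * (exp (k * θ * I) * Real.cos (m * θ))).im := by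
        simp_rw [← imCLM_apply]
        exact imCLM.intervalIntegral_comp_comm (Continuous.intervalIntegrable (by fun_prop) _ _)
    _ = π * (c m + c (-m)).im := by
        rw [intervalIntegral.integral_finsetSum
          (fun k _ => by apply Continuous.intervalIntegrable; fun_prop)]
        simp_rw [intervalIntegral.integral_const_mul, integral_exp_int_mul_I_mul_cos, mul_add,
          mul_ite, mul_one, mul_zero, Finset.sum_add_distrib, Finset.sum_ite_eq', hmem, add_im,
          im_mul_ofReal]
        ring

theorem chebCoeff_eq_of_cos_eq_im_sum {f : ℝ → ℝ} (s : Finset ℤ) (c : ℤ → ℂ)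
    (hc : ∀ k ∉ s, c k = 0) (hf : ∀ θ, f (Real.cos θ) = (∑ k ∈ s, c k * exp (k * θ * I)).im)
    (j : ℕ) : chebCoeff f j = (if j = 0 then 1 / 2 else 1) * (c (2 * j) + c (-(2 * j))).im := by
  have hint := integral_im_sum_mul_cos s c hc (2 * j)
  simp_rw [← hf] at hint
  push_cast at hint
  rw [chebCoeff, hint]
  have := Real.pi_pos.ne'
  split_ifs <;> field_simp

section QSPProduct

variable {R : Type*} [Monoid R]

def qspProd (W : R) (E : ℕ → R) (d : ℕ) : R :=
  E 0 * ((List.range d).map fun j => W * E (j + 1)).prod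

theorem qspProd_zero (W : R) (E : ℕ → R) : qspProd W E 0 = E 0 := by
  simp [qspProd]

theorem qspProd_succ (W : R) (E : ℕ → R) (d : ℕ) :
    qspProd W E (d + 1) = qspProd W E d * (W * E (d + 1)) := by
  simp [qspProd, List.range_succ, mul_assoc]

theorem map_qspProd {S F : Type*} [Monoid S] [FunLike F R S] [MonoidHomClass F R S] (f : F)
    (W : R) (E : ℕ → R) (d : ℕ) : f (qspProd W E d) = qspProd (f W) (fun j => f (E j)) d := by
  simp [qspProd, map_list_prod, Function.comp_def]

end QSPProduct

theorem Umat_eq_qspProd (x : ℝ) (d : ℕ) (Ψ : ℕ → ℝ) :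
    Umat x d Ψ = qspProd (Wmat x) (fun j => expZ (Ψ j)) d := rfl

def Wexp (θ : ℝ) : Matrix (Fin 2) (Fin 2) ℂ :=
  !![(Real.cos θ : ℂ), I * Real.sin θ; I * Real.sin θ, (Real.cos θ : ℂ)]

def Zmat : Matrix (Fin 2) (Fin 2) ℂ := !![1, 0; 0, -1]

theorem Zmat_mul_self : Zmat * Zmat = 1 := by
  simp [Zmat, Matrix.one_fin_two]

def conjZ : Matrix (Fin 2) (Fin 2) ℂ →* Matrix (Fin 2) (Fin 2) ℂ where
  toFun M := Zmat * M * Zmat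
  map_one' := by rw [mul_one, Zmat_mul_self]
  map_mul' M N := by
    simp only [mul_assoc]
    rw [← mul_assoc Zmat Zmat, Zmat_mul_self, one_mul]

theorem conjZ_apply_zero_zero (M : Matrix (Fin 2) (Fin 2) ℂ) : conjZ M 0 0 = M 0 0 := by
  rw [Matrix.eta_fin_two M]
  simp [conjZ, Zmat]

theorem conjZ_expZ (ψ : ℝ) : conjZ (expZ ψ) = expZ ψ := by
  simp [conjZ, Zmat, expZ]

theorem conjZ_Wexp (θ : ℝ) : conjZ (Wexp θ) = Wexp (-θ) := by
  simp [conjZ, Zmat, Wexp]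

theorem Wmat_cos (θ : ℝ) : Wmat (Real.cos θ) = Wexp θ ∨ Wmat (Real.cos θ) = conjZ (Wexp θ) := by
  have hsqrt : Real.sqrt (1 - Real.cos θ ^ 2) = |Real.sin θ| := by
    rw [← Real.sin_sq, Real.sqrt_sq_eq_abs]
  rw [conjZ_Wexp]
  rcases abs_cases (Real.sin θ) with ⟨h, -⟩ | ⟨h, -⟩
  · exact Or.inl (by simp [Wmat, Wexp, hsqrt, h])
  · exact Or.inr (by simp [Wmat, Wexp, hsqrt, h])

theorem Umat_cos_apply_zero_zero (θ : ℝ) (d : ℕ) (Ψ : ℕ → ℝ) :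
    Umat (Real.cos θ) d Ψ 0 0 = qspProd (Wexp θ) (fun j => expZ (Ψ j)) d 0 0 := by
  rcases Wmat_cos θ with h | h
  · rw [Umat_eq_qspProd, h]
  · rw [← conjZ_apply_zero_zero (qspProd _ _ d), map_qspProd, Umat_eq_qspProd, h]
    simp only [conjZ_expZ]

def fourierScalar (θ : ℝ) : Multiplicative ℤ →* Matrix (Fin 2) (Fin 2) ℂ where
  toFun k := scalar (Fin 2) (exp (k.toAdd * θ * I))
  map_one' := by simp
  map_mul' k l := by simp [add_mul, Complex.exp_add]

theorem commute_fourierScalar (θ : ℝ) (M : Matrix (Fin 2) (Fin 2) ℂ) (k : Multiplicative ℤ) :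
    Commute M (fourierScalar θ k) :=
  (scalar_commute _ (fun _ => Commute.all _ _) M).symm

def laurentEval (θ : ℝ) :
    AddMonoidAlgebra (Matrix (Fin 2) (Fin 2) ℂ) ℤ →+* Matrix (Fin 2) (Fin 2) ℂ :=
  liftNCRingHom (RingHom.id _) (fourierScalar θ) (commute_fourierScalar θ)

theorem laurentEval_single (θ : ℝ) (k : ℤ) (M : Matrix (Fin 2) (Fin 2) ℂ) :
    laurentEval θ (single k M) = exp (k * θ * I) • M := by
  rw [laurentEval, liftNCRingHom_single, smul_eq_mul_diagonal]
  rfl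

theorem laurentEval_apply (θ : ℝ) (f : AddMonoidAlgebra (Matrix (Fin 2) (Fin 2) ℂ) ℤ) :
    laurentEval θ f = ∑ k ∈ f.coeff.support, exp (k * θ * I) • f.coeff k := by
  conv_lhs => rw [← sum_coeff_single f]
  rw [map_finsuppSum]
  simp only [Finsupp.sum, laurentEval_single]

section LaurentCoeff

variable {R : Type*} [Ring R] (A B : R) (E : ℕ → R)

def laurentSignal : AddMonoidAlgebra R ℤ := single 1 A + single (-1) B

theorem coeff_mul_laurentSignal_mul_single_zero (x : AddMonoidAlgebra R ℤ) (e : R) (k : ℤ) :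
    (x * (laurentSignal A B * single 0 e)).coeff k =
      x.coeff (k - 1) * (A * e) + x.coeff (k + 1) * (B * e) := by
  rw [laurentSignal, add_mul, single_mul_single, single_mul_single, mul_add, coeff_add,
    Finsupp.add_apply, coeff_mul_single_apply, coeff_mul_single_apply, add_zero, add_zero,
    ← sub_eq_add_neg, neg_neg]

theorem coeff_qspProd_laurentSignal_eq_zero (d : ℕ) {k : ℤ} (hk : d < |k|) :
    (qspProd (laurentSignal A B) (fun j => single 0 (E j)) d).coeff k = 0 := by
  induction d generalizing k with
  | zero =>
    rw [qspProd_zero, coeff_single, Finsupp.single_eq_of_ne]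
    rintro rfl
    simp at hk
  | succ d ih =>
    rw [lt_abs] at hk
    rw [qspProd_succ, coeff_mul_laurentSignal_mul_single_zero, ih (by rw [lt_abs]; omega),
      ih (by rw [lt_abs]; omega), zero_mul, zero_mul, add_zero]

theorem coeff_qspProd_laurentSignal_natCast (d : ℕ) :
    (qspProd (laurentSignal A B) (fun j => single 0 (E j)) d).coeff d = qspProd A E d := by
  induction d with
  | zero => simp [qspProd_zero]
  | succ d ih =>
    rw [qspProd_succ, coeff_mul_laurentSignal_mul_single_zero, Nat.cast_succ,
      add_sub_cancel_right, ih, coeff_qspProd_laurentSignal_eq_zero _ _ _ _ (by rw [lt_abs]; omega),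
      zero_mul, add_zero, qspProd_succ]

theorem coeff_qspProd_laurentSignal_neg_natCast (d : ℕ) :
    (qspProd (laurentSignal A B) (fun j => single 0 (E j)) d).coeff (-d) = qspProd B E d := by
  induction d with
  | zero => simp [qspProd_zero]
  | succ d ih =>
    rw [qspProd_succ, coeff_mul_laurentSignal_mul_single_zero, Nat.cast_succ, neg_add,
      neg_add_cancel_right, ih, coeff_qspProd_laurentSignal_eq_zero _ _ _ _ (by rw [lt_abs]; omega),
      zero_mul, zero_add, qspProd_succ]

end LaurentCoeff

def Pplus : Matrix (Fin 2) (Fin 2) ℂ := !![1 / 2, 1 / 2; 1 / 2, 1 / 2]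

def Pminus : Matrix (Fin 2) (Fin 2) ℂ := !![1 / 2, -1 / 2; -1 / 2, 1 / 2]

theorem laurentEval_laurentSignal (θ : ℝ) :
    laurentEval θ (laurentSignal Pplus Pminus) = Wexp θ := by
  have hcos : (Real.cos θ : ℂ) = (exp (θ * I) + exp (-θ * I)) / 2 := by
    rw [ofReal_cos, Complex.cos]
  have hsin : I * Real.sin θ = (exp (θ * I) - exp (-θ * I)) / 2 := by
    rw [ofReal_sin, Complex.sin, mul_div_assoc', ← mul_assoc, mul_comm I, mul_assoc, I_mul_I]
    ring
  rw [laurentSignal, map_add, laurentEval_single, laurentEval_single, Wexp, hcos, hsin]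
  ext i j
  fin_cases i <;> fin_cases j <;> simp [Pplus, Pminus] <;> ring

theorem Pplus_mul_expZ_mul_Pplus (ψ : ℝ) :
    Pplus * expZ ψ * Pplus = (Real.cos ψ : ℂ) • Pplus := by
  ext i j
  fin_cases i <;> fin_cases j <;>
    simp [Pplus, expZ, ofReal_cos, Complex.cos] <;> ring_nf

theorem Pminus_mul_expZ_mul_Pminus (ψ : ℝ) :
    Pminus * expZ ψ * Pminus = (Real.cos ψ : ℂ) • Pminus := by
  ext i j
  fin_cases i <;> fin_cases j <;>
    simp [Pminus, expZ, ofReal_cos, Complex.cos] <;> ring_nf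

theorem qspProd_succ_eq_prod_cos_smul {P : Matrix (Fin 2) (Fin 2) ℂ}
    (hP : ∀ ψ, P * expZ ψ * P = (Real.cos ψ : ℂ) • P) (Ψ : ℕ → ℝ) (d : ℕ) :
    qspProd P (fun j => expZ (Ψ j)) (d + 1) =
      (∏ i ∈ Finset.Ico 1 (d + 1), (Real.cos (Ψ i) : ℂ)) • (expZ (Ψ 0) * P * expZ (Ψ (d + 1))) := by
  induction d with
  | zero => simp [qspProd_succ, qspProd_zero, mul_assoc]
  | succ d ih =>
    have hstep : expZ (Ψ 0) * P * expZ (Ψ (d + 1)) * (P * expZ (Ψ (d + 2))) =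
        (Real.cos (Ψ (d + 1)) : ℂ) • (expZ (Ψ 0) * P * expZ (Ψ (d + 2))) := by
      calc _ = expZ (Ψ 0) * (P * expZ (Ψ (d + 1)) * P) * expZ (Ψ (d + 2)) := by
            simp only [mul_assoc]
        _ = _ := by rw [hP, mul_smul_comm, smul_mul_assoc]
    rw [qspProd_succ, ih, smul_mul_assoc, hstep, smul_smul,
      Finset.prod_Ico_succ_top (Nat.le_add_left 1 d)]

theorem expZ_mul_Pplus_mul_expZ_apply_zero_zero (a b : ℝ) :
    (expZ a * Pplus * expZ b) 0 0 = exp ((a + b : ℝ) * I) / 2 := by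
  rw [show ((a + b : ℝ) : ℂ) * I = I * a + I * b by push_cast; ring, Complex.exp_add]
  simp [Pplus, expZ]
  ring

theorem expZ_mul_Pminus_mul_expZ_apply_zero_zero (a b : ℝ) :
    (expZ a * Pminus * expZ b) 0 0 = exp ((a + b : ℝ) * I) / 2 := by
  rw [show ((a + b : ℝ) : ℂ) * I = I * a + I * b by push_cast; ring, Complex.exp_add]
  simp [Pminus, expZ]
  ring

def qspLaurent (Ψ : ℕ → ℝ) (d : ℕ) : AddMonoidAlgebra (Matrix (Fin 2) (Fin 2) ℂ) ℤ :=
  qspProd (laurentSignal Pplus Pminus) (fun j => single 0 (expZ (Ψ j))) d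

theorem laurentEval_qspLaurent (θ : ℝ) (Ψ : ℕ → ℝ) (d : ℕ) :
    laurentEval θ (qspLaurent Ψ d) = qspProd (Wexp θ) (fun j => expZ (Ψ j)) d := by
  rw [qspLaurent, map_qspProd, laurentEval_laurentSignal]
  congr 1
  funext j
  rw [laurentEval_single]
  simp

theorem gfun_cos (θ : ℝ) (d : ℕ) (Ψ : ℕ → ℝ) :
    gfun (Real.cos θ) d Ψ = (∑ k ∈ (qspLaurent Ψ d).coeff.support,
      (qspLaurent Ψ d).coeff k 0 0 * exp (k * θ * I)).im := by
  rw [gfun, Umat_cos_apply_zero_zero, ← laurentEval_qspLaurent, laurentEval_apply,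
    Matrix.sum_apply]
  simp [mul_comm]

theorem chebCoeff_gfun (d : ℕ) (Ψ : ℕ → ℝ) (j : ℕ) :
    chebCoeff (fun x => gfun x d Ψ) j = (if j = 0 then 1 / 2 else 1) *
      ((qspLaurent Ψ d).coeff (2 * j) 0 0 + (qspLaurent Ψ d).coeff (-(2 * j)) 0 0).im :=
  chebCoeff_eq_of_cos_eq_im_sum (qspLaurent Ψ d).coeff.support
    (fun k => (qspLaurent Ψ d).coeff k 0 0)
    (fun k hk => by rw [Finsupp.notMem_support_iff.mp hk, Matrix.zero_apply]) (gfun_cos · d Ψ) j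

theorem chebCoeff_gfun_eq_zero {d j : ℕ} (hj : d < 2 * j) (Ψ : ℕ → ℝ) :
    chebCoeff (fun x => gfun x d Ψ) j = 0 := by
  rw [chebCoeff_gfun, qspLaurent, coeff_qspProd_laurentSignal_eq_zero _ _ _ _ (by simp; omega),
    coeff_qspProd_laurentSignal_eq_zero _ _ _ _ (by simp; omega)]
  simp

theorem chebCoeff_gfun_zero_zero (Ψ : ℕ → ℝ) :
    chebCoeff (fun x => gfun x 0 Ψ) 0 = Real.sin (Ψ 0) := by
  have h0 : (qspLaurent Ψ 0).coeff 0 = expZ (Ψ 0) := by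
    rw [qspLaurent, qspProd_zero, coeff_single, Finsupp.single_eq_same]
  rw [chebCoeff_gfun]
  simp [h0, expZ, mul_comm I, exp_ofReal_mul_I_im]
  ring

theorem chebCoeff_gfun_leading (Ψ : ℕ → ℝ) (m : ℕ) :
    chebCoeff (fun x => gfun x (2 * m + 2) Ψ) (m + 1) =
      Real.sin (Ψ 0 + Ψ (2 * m + 2)) * ∏ i ∈ Finset.Ico 1 (2 * m + 2), Real.cos (Ψ i) := by
  have hdeg : 2 * ((m + 1 : ℕ) : ℤ) = ((2 * m + 2 : ℕ) : ℤ) := by push_cast; ring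
  rw [chebCoeff_gfun, if_neg m.succ_ne_zero, one_mul, hdeg, qspLaurent,
    coeff_qspProd_laurentSignal_natCast, coeff_qspProd_laurentSignal_neg_natCast,
    qspProd_succ_eq_prod_cos_smul Pplus_mul_expZ_mul_Pplus,
    qspProd_succ_eq_prod_cos_smul Pminus_mul_expZ_mul_Pminus, Matrix.smul_apply, Matrix.smul_apply,
    expZ_mul_Pplus_mul_expZ_apply_zero_zero, expZ_mul_Pminus_mul_expZ_apply_zero_zero,
    ← ofReal_prod, smul_eq_mul, ← mul_add, add_halves, im_ofReal_mul, exp_ofReal_mul_I_im,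
    mul_comm]

theorem nOf_eq_of_effective_length {Φ : ℕ →₀ ℝ} {n : ℕ} (hsupp : ∀ k, n ≤ k → Φ k = 0)
    (hn : 1 ≤ n) (heff : Φ (n - 1) ≠ 0) : nOf Φ = n := by
  have hle : Φ.support.sup id ≤ n - 1 := Finset.sup_le fun k hk => by
    by_contra h
    exact Finsupp.mem_support_iff.mp hk (hsupp k (by simp only [id] at h; omega))
  have hge : n - 1 ≤ Φ.support.sup id := Finset.le_sup (f := id) (Finsupp.mem_support_iff.mpr heff)
  rw [nOf]
  omega

theorem Fmap_eq_zero_of_nOf_le {Φ : ℕ →₀ ℝ} {j : ℕ} (hj : nOf Φ ≤ j) : Fmap Φ j = 0 :=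
  chebCoeff_gfun_eq_zero (by have : 1 ≤ nOf Φ := Nat.le_add_left 1 _; omega) _

theorem Fmap_nOf_sub_one (Φ : ℕ →₀ ℝ) : Fmap Φ (nOf Φ - 1) = Real.sin (2 * Φ (nOf Φ - 1)) *
    ∏ i ∈ Finset.Ico 1 (2 * nOf Φ - 2), Real.cos (pad Φ (nOf Φ) i) := by
  obtain ⟨N, hN⟩ : ∃ N, nOf Φ = N + 1 := ⟨_, rfl⟩
  simp only [Fmap, gred, hN, Nat.add_sub_cancel]
  cases N with
  | zero => simp [chebCoeff_gfun_zero_zero, pad]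
  | succ m =>
    have hfirst : pad Φ (m + 2) 0 = Φ (m + 1) := by simp [pad]
    have hlast : pad Φ (m + 2) (2 * m + 2) = Φ (m + 1) := by
      rw [pad, if_neg (by omega), if_neg (by omega)]
      congr 1
      omega
    rw [show 2 * (m + 1 + 1) - 2 = 2 * m + 2 by omega, chebCoeff_gfun_leading, hfirst, hlast,
      ← two_mul]

theorem abs_le_l1 (Φ : ℕ →₀ ℝ) (k : ℕ) : |Φ k| ≤ l1 Φ := by
  by_cases h : Φ k = 0
  · rw [h, abs_zero]
    exact Finset.sum_nonneg fun _ _ => abs_nonneg _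
  · exact Finset.single_le_sum (f := fun i => |Φ i|) (fun _ _ => abs_nonneg _)
      (Finsupp.mem_support_iff.mpr h)

theorem abs_pad_le (Φ : ℕ →₀ ℝ) (n i : ℕ) : |pad Φ n i| ≤ 2 * l1 Φ := by
  have h0 := abs_le_l1 Φ 0
  have hnonneg := (abs_nonneg _).trans h0
  unfold pad
  split_ifs
  · linarith [abs_le_l1 Φ (n - 1 - i)]
  · rw [abs_mul, abs_two]
    linarith
  · linarith [abs_le_l1 Φ (i + 1 - n)]

theorem two_mul_rPhi_lt_half_pi : 2 * rPhi < π / 2 := by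
  have hsqrt : Real.sqrt 3 < 2 := by
    rw [Real.sqrt_lt' two_pos]
    norm_num
  have hlog : Real.log (2 + Real.sqrt 3) < 2 * Real.log 2 := by
    rw [← Real.log_rpow two_pos]
    exact Real.log_lt_log (by positivity) (by norm_num; linarith)
  have := Real.log_two_lt_d9
  have := Real.pi_gt_d6
  rw [rPhi]
  linarith

/-- if `‖Φ‖₁ ≤ r_Φ` and `n` is the effective length of `Φ`, then the
effective length of `F(Φ)` equals `n`. -/
theorem Fmap_effective_length (Φ : ℕ →₀ ℝ) (hΦ : l1 Φ ≤ rPhi) (n : ℕ)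
    (hsupp : ∀ k, n ≤ k → Φ k = 0) (heff : 1 ≤ n → Φ (n - 1) ≠ 0) :
    (∀ j, n ≤ j → Fmap Φ j = 0) ∧ (1 ≤ n → Fmap Φ (n - 1) ≠ 0) := by
  rcases Nat.eq_zero_or_pos n with rfl | hn
  · obtain rfl : Φ = 0 := Finsupp.ext fun k => hsupp k k.zero_le
    have hN : nOf 0 = 1 := by simp [nOf]
    refine ⟨fun j _ => ?_, by omega⟩
    rcases Nat.eq_zero_or_pos j with rfl | hj
    · simpa [hN] using Fmap_nOf_sub_one 0
    · exact Fmap_eq_zero_of_nOf_le (hN ▸ hj)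
  have hN := nOf_eq_of_effective_length hsupp hn (heff hn)
  have hpad : ∀ i, |pad Φ n i| < π / 2 := fun i =>
    (abs_pad_le Φ n i).trans_lt (by linarith [two_mul_rPhi_lt_half_pi])
  refine ⟨fun j hj => Fmap_eq_zero_of_nOf_le (hN ▸ hj), fun _ => ?_⟩
  rw [← hN, Fmap_nOf_sub_one, hN]
  refine mul_ne_zero ?_
    (Finset.prod_pos fun i _ => Real.cos_pos_of_mem_Ioo (abs_lt.mp (hpad i))).ne'
  have hsin : |2 * Φ (n - 1)| < π := by
    rw [abs_mul, abs_two]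
    linarith [abs_le_l1 Φ (n - 1), two_mul_rPhi_lt_half_pi, Real.pi_pos]
  rw [abs_lt] at hsin
  rw [Ne, Real.sin_eq_zero_iff_of_lt_of_lt hsin.1 hsin.2]
  exact mul_ne_zero two_ne_zero (heff hn)
end
end
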